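/- arXiv:2601.09244 — 2 statements merged into one kernel-verified Lean document; each statement's English description precedes it below -/
import Mathlib

section
/- Let s ≥ r ≥ 2 be integers and let F be a graph. Then there exist constants c1, c2 > 0 and an integer N such that c1·n^s ≤ ex_r(n, K_s^{(r)}, F^r) ≤ c2·n^s for all n ≥ N if and only if χ(F) > s. -/
open Finset

/-- A hypergraph (with vertices drawn from `ℕ`) given by its finite set of hyperedges. -/
abbrev HG : Type := Finset (Finset ℕ)

/-- The support (set of non-isolated vertices) of a hypergraph. -/
def hsupp (G : HG) : Finset ℕ := G.sup id

/-- `G` is `r`-uniform: every hyperedge has exactly `r` vertices. -/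
def Uniform (r : ℕ) (G : HG) : Prop := ∀ e ∈ G, e.card = r

/-- The image of a hypergraph under a relabelling of the vertices. -/
def emap (f : ℕ → ℕ) (G : HG) : HG := G.image (Finset.image f)

/-- `K` is an isomorphic copy of `H` (as hypergraphs; isolated vertices are irrelevant). -/
def IsCopy (H K : HG) : Prop :=
  ∃ f : ℕ → ℕ, Set.InjOn f ↑(hsupp H) ∧ emap f H = K

/-- `G` contains a subhypergraph isomorphic to `H`. -/
def Contains (G H : HG) : Prop := ∃ K, K ⊆ G ∧ IsCopy H K

/-- `N(H, G)`: the number of subhypergraphs of `G` isomorphic to `H`. -/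
noncomputable def copyCount (H G : HG) : ℕ :=
  Set.ncard {K : HG | K ⊆ G ∧ IsCopy H K}

/-- The generalized Turán number `ex_r(n, H, F)`: the maximum number of copies of `H`
in an `F`-free `r`-uniform hypergraph on `n` vertices. -/
noncomputable def exCount (r n : ℕ) (H F : HG) : ℕ :=
  sSup { m | ∃ G : HG, Uniform r G ∧ hsupp G ⊆ Finset.range n ∧
    ¬ Contains G F ∧ m = copyCount H G }

/-- The Turán number `ex_r(n, F)`: the maximum number of hyperedges in an `F`-free
`r`-uniform hypergraph on `n` vertices. -/
noncomputable def exTuran (r n : ℕ) (F : HG) : ℕ :=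
  sSup { m | ∃ G : HG, Uniform r G ∧ hsupp G ⊆ Finset.range n ∧
    ¬ Contains G F ∧ m = G.card }

/-- The complete `r`-graph `K_s^{(r)}` on `s` vertices. -/
def completeHG (r s : ℕ) : HG := Finset.powersetCard r (Finset.range s)

/-- The path `P_l` with `l` edges, as a 2-uniform hypergraph. -/
def pathG (l : ℕ) : HG := (Finset.range l).image (fun i => ({i, i+1} : Finset ℕ))

/-- The cycle `C_l` with `l` edges, as a 2-uniform hypergraph. -/
def cycleG (l : ℕ) : HG := (Finset.range l).image (fun i => ({i, (i+1) % l} : Finset ℕ))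

/-- The star `S_l = K_{1,l}` with `l` edges, as a 2-uniform hypergraph. -/
def starG (l : ℕ) : HG := (Finset.range l).image (fun i => ({0, i+1} : Finset ℕ))

/-- The `r`-expansion `F^r` of a graph `F`: insert `r - 2` new distinct vertices into each
edge of `F`, the new vertices being distinct across edges and disjoint from `V(F)`. -/
def expansion (r : ℕ) (F : HG) : HG :=
  F.image (fun e => e.image (fun v => Nat.pair 0 v) ∪
    (Finset.range (r-2)).image (fun j => Nat.pair 1 (Nat.pair (Encodable.encode e) j)))

/-- The vertex-disjoint union of the hypergraphs `H 0, …, H (k-1)`. -/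
def hIUnion (k : ℕ) (H : ℕ → HG) : HG :=
  (Finset.range k).biUnion (fun i => emap (fun v => Nat.pair i v) (H i))

/-- The vertex-disjoint union of two hypergraphs. -/
def hUnion (G H : HG) : HG := emap (fun v => 2*v) G ∪ emap (fun v => 2*v+1) H

/-- The strong chromatic number of a hypergraph (for a 2-uniform hypergraph this is
the usual chromatic number of the graph). -/
noncomputable def chromNum (G : HG) : ℕ :=
  sInf { k | ∃ c : ℕ → Fin k, ∀ e ∈ G, Set.InjOn c ↑e }

/-- The complete balanced `l`-partite `r`-graph `T_r(n, l)` on `n` vertices. -/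
def turanHG (r n l : ℕ) : HG :=
  (Finset.powersetCard r (Finset.range n)).filter
    (fun e => ∀ i ∈ e, ∀ j ∈ e, i % l = j % l → i = j)

/-- `S_{n,t}^r(n-t, l)`: take a set `U` of `t` vertices together with a disjoint copy of
`T_r(n-t, l)`, and add as hyperedges all `r`-sets meeting `U`. -/
def splitTuranHG (r n t l : ℕ) : HG :=
  (Finset.powersetCard r (Finset.range n)).filter
    (fun e => (∃ v ∈ e, v < t) ∨ ∀ i ∈ e, ∀ j ∈ e, (i - t) % l = (j - t) % l → i = j)

/-- `S_{n,t}^r`: the `n`-vertex `r`-graph of all `r`-sets meeting a fixed set of `t` vertices. -/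
def starHG (r n t : ℕ) : HG :=
  (Finset.powersetCard r (Finset.range n)).filter (fun e => ∃ v ∈ e, v < t)

/-- `F` is a member of the family `𝒦_t^r`. -/
def memFamilyK (r t : ℕ) (F : HG) : Prop :=
  Uniform r F ∧ F.card ≤ Nat.choose t 2 ∧
    ∃ S : Finset ℕ, S.card = t ∧ ∀ u ∈ S, ∀ v ∈ S, u ≠ v → ∃ e ∈ F, u ∈ e ∧ v ∈ e

/-- The maximum number of copies of `H` in an `n`-vertex `r`-graph containing no member
of the family described by the predicate `P` as a subhypergraph. -/
noncomputable def exCountFam (r n : ℕ) (H : HG) (P : HG → Prop) : ℕ :=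
  sSup { m | ∃ G : HG, Uniform r G ∧ hsupp G ⊆ Finset.range n ∧
    (∀ F : HG, P F → ¬ Contains G F) ∧ m = copyCount H G }

/-- `G` contains a Berge copy of `F`. -/
def ContainsBerge (G F : HG) : Prop :=
  ∃ f : ℕ → ℕ, Set.InjOn f ↑(hsupp F) ∧
    ∃ φ : {e : Finset ℕ // e ∈ F} → {e : Finset ℕ // e ∈ G},
      Function.Injective φ ∧ ∀ e : {e : Finset ℕ // e ∈ F}, e.1.image f ⊆ (φ e).1

/-- `ex_s(n, Berge-F)`: the maximum number of hyperedges in an `n`-vertex `s`-graph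
containing no Berge copy of `F`. -/
noncomputable def exBerge (s n : ℕ) (F : HG) : ℕ :=
  sSup { m | ∃ G : HG, Uniform s G ∧ hsupp G ⊆ Finset.range n ∧
    ¬ ContainsBerge G F ∧ m = G.card }


lemma mem_hsupp {v : ℕ} {G : HG} : v ∈ hsupp G ↔ ∃ e ∈ G, v ∈ e := by
  simp [hsupp, Finset.mem_sup]

lemma edge_subset_hsupp {e : Finset ℕ} {G : HG} (he : e ∈ G) : e ⊆ hsupp G :=
  Finset.le_sup (f := id) he

lemma hsupp_mono {G G' : HG} (h : G ⊆ G') : hsupp G ⊆ hsupp G' := Finset.le_iff_subset.mp (Finset.sup_mono h)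

lemma image_powersetCard {f : ℕ → ℕ} {A : Finset ℕ} (hf : Set.InjOn f ↑A) (r : ℕ) :
    (Finset.powersetCard r A).image (Finset.image f) = Finset.powersetCard r (A.image f) := by
  ext B
  simp only [Finset.mem_image, Finset.mem_powersetCard]
  constructor
  · rintro ⟨C, ⟨hCA, hCr⟩, rfl⟩
    exact ⟨Finset.image_subset_image hCA, by
      rw [Finset.card_image_of_injOn (hf.mono (by exact_mod_cast hCA))]; exact hCr⟩
  · rintro ⟨hBA, hBr⟩
    obtain ⟨C, hCA, hCB⟩ := Finset.subset_image_iff.1 hBA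
    refine ⟨C, ⟨hCA, ?_⟩, hCB⟩
    rw [← hBr, ← hCB, Finset.card_image_of_injOn (hf.mono (by exact_mod_cast hCA))]

lemma hsupp_powersetCard {r : ℕ} (hr : 1 ≤ r) {S : Finset ℕ} (hrS : r ≤ S.card) :
    hsupp (Finset.powersetCard r S) = S := by
  apply Finset.Subset.antisymm
  · intro v hv
    obtain ⟨e, he, hve⟩ := mem_hsupp.1 hv
    exact (Finset.mem_powersetCard.1 he).1 hve
  · intro v hv
    obtain ⟨B, hB, hBcard⟩ := Finset.exists_subset_card_eq
      (show r - 1 ≤ (S.erase v).card by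
        rw [Finset.card_erase_of_mem hv]; omega)
    refine mem_hsupp.2 ⟨insert v B, Finset.mem_powersetCard.2 ⟨?_, ?_⟩, Finset.mem_insert_self _ _⟩
    · exact Finset.insert_subset hv (hB.trans (Finset.erase_subset _ _))
    · rw [Finset.card_insert_of_notMem (fun hvB => (Finset.mem_erase.1 (hB hvB)).1 rfl), hBcard]
      omega

lemma isCopy_complete_iff {r s : ℕ} (hr : 1 ≤ r) (hrs : r ≤ s) {K : HG}
    (h : IsCopy (completeHG r s) K) :
    ∃ S : Finset ℕ, S.card = s ∧ K = Finset.powersetCard r S := by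
  obtain ⟨f, hf, rfl⟩ := h
  have hsuppC : hsupp (completeHG r s) = Finset.range s :=
    hsupp_powersetCard hr (by simpa using hrs)
  rw [hsuppC] at hf
  refine ⟨(Finset.range s).image f, ?_, ?_⟩
  · rw [Finset.card_image_of_injOn hf, Finset.card_range]
  · exact image_powersetCard hf r

lemma copyCount_complete_le {r s n : ℕ} (hr : 1 ≤ r) (hrs : r ≤ s) {G : HG}
    (hG : hsupp G ⊆ Finset.range n) :
    copyCount (completeHG r s) G ≤ n.choose s := by
  classical
  have key : ∀ K ∈ {K : HG | K ⊆ G ∧ IsCopy (completeHG r s) K},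
      hsupp K ∈ (Finset.powersetCard s (Finset.range n)) ∧ K = Finset.powersetCard r (hsupp K) := by
    rintro K ⟨hKG, hK⟩
    obtain ⟨S, hScard, rfl⟩ := isCopy_complete_iff hr hrs hK
    have hSs : hsupp (Finset.powersetCard r S) = S := hsupp_powersetCard hr (by omega)
    rw [hSs]
    exact ⟨Finset.mem_powersetCard.2 ⟨(hSs ▸ hsupp_mono hKG).trans hG, hScard⟩, rfl⟩
  have hinj : Set.InjOn hsupp {K : HG | K ⊆ G ∧ IsCopy (completeHG r s) K} := by
    intro K hK K' hK' hKK'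
    rw [(key K hK).2, (key K' hK').2, hKK']
  calc copyCount (completeHG r s) G
      = (hsupp '' {K : HG | K ⊆ G ∧ IsCopy (completeHG r s) K}).ncard :=
        (Set.ncard_image_of_injOn hinj).symm
    _ ≤ (Finset.powersetCard s (Finset.range n) : Finset (Finset ℕ)).card := by
        rw [← Set.ncard_coe_finset]
        apply Set.ncard_le_ncard _ (Finset.finite_toSet _)
        rintro S ⟨K, hK, rfl⟩
        exact (key K hK).1
    _ = n.choose s := by rw [Finset.card_powersetCard, Finset.card_range]


/-- Erdős box theorem, ℕ-quantitative form. -/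
lemma box (t : ℕ) (ht : 1 ≤ t) :
    ∀ s k : ℕ, 1 ≤ k → ∃ n0 : ℕ, 1 ≤ n0 ∧ ∀ n, n0 ≤ n → ∀ H : Finset (Finset ℕ),
      (∀ e ∈ H, e.card = s ∧ e ⊆ Finset.range n) → n ^ s ≤ k * H.card →
      ∃ P : Fin s → Finset ℕ, (∀ i, (P i).card = t) ∧
        (∀ i j, i ≠ j → Disjoint (P i) (P j)) ∧
        (∀ g : Fin s → ℕ, (∀ i, g i ∈ P i) → Finset.image g Finset.univ ∈ H) := by
  intro s
  induction s with
  | zero =>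
    intro k hk
    refine ⟨1, le_refl _, fun n hn H hH hcard => ?_⟩
    have hHne : H.Nonempty := by
      rw [← Finset.card_pos]
      by_contra h
      push_neg at h
      interval_cases h' : H.card <;> simp_all
    obtain ⟨e, he⟩ := hHne
    have he0 : e = ∅ := Finset.card_eq_zero.1 (hH e he).1
    refine ⟨fun i => i.elim0, fun i => i.elim0, fun i => i.elim0, fun g _ => ?_⟩
    have : (Finset.univ : Finset (Fin 0)) = ∅ := rfl
    rw [this, Finset.image_empty]
    rwa [he0] at he
  | succ s IH =>
    intro k hk
    -- constants
    set M : ℕ := t.factorial * (4 * k) ^ t with hM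
    set K1 : ℕ := 2 * k * M with hK1
    have hM1 : 1 ≤ M := Nat.one_le_iff_ne_zero.2 (by positivity)
    have hK11 : 1 ≤ K1 := Nat.one_le_iff_ne_zero.2 (by positivity)
    obtain ⟨n1, hn11, hIH⟩ := IH K1 hK11
    refine ⟨max n1 (4 * k * t), le_trans hn11 (le_max_left _ _), fun n hn H hH hcard => ?_⟩
    have hn1 : n1 ≤ n := le_trans (le_max_left _ _) hn
    have hn4kt : 4 * k * t ≤ n := le_trans (le_max_right _ _) hn
    have hnpos : 1 ≤ n := le_trans hn11 hn1
    classical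
    set 𝒮 : Finset (Finset ℕ) := Finset.powersetCard s (Finset.range n) with h𝒮
    set Nv : Finset ℕ → Finset ℕ :=
      fun e => (Finset.range n).filter (fun v => v ∉ e ∧ insert v e ∈ H) with hNv
    -- Step 1 : H.card ≤ ∑ e ∈ 𝒮, (Nv e).card
    have step1 : H.card ≤ ∑ e ∈ 𝒮, (Nv e).card := by
      rw [← Finset.card_sigma]
      set pick : Finset ℕ → ℕ := fun f => if h : f.Nonempty then f.min' h else 0 with hpick
      have hpickmem : ∀ f : Finset ℕ, f ∈ H → pick f ∈ f := by
        intro f hf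
        have hne : f.Nonempty := Finset.card_pos.1 (by rw [(hH f hf).1]; omega)
        simp only [hpick, dif_pos hne]
        exact Finset.min'_mem f hne
      apply Finset.card_le_card_of_injOn (fun f => ⟨f.erase (pick f), pick f⟩)
      · intro f hf
        have hpf := hpickmem f hf
        refine Finset.mem_sigma.2 ⟨?_, ?_⟩
        · refine Finset.mem_powersetCard.2 ⟨(Finset.erase_subset _ _).trans (hH f hf).2, ?_⟩
          rw [Finset.card_erase_of_mem hpf, (hH f hf).1]
          omega

        · refine Finset.mem_filter.2 ⟨(hH f hf).2 hpf, Finset.notMem_erase _ _, ?_⟩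
          rw [Finset.insert_erase hpf]; exact hf
      · intro f hf f' hf' heq
        simp only [Sigma.mk.inj_iff] at heq
        obtain ⟨h1, h2⟩ := heq
        have h2' : pick f = pick f' := eq_of_heq h2
        rw [← Finset.insert_erase (hpickmem f hf), ← Finset.insert_erase (hpickmem f' hf'),
          h1, h2']
    -- Step 2
    have step2 : n ^ (s + 1) ≤ k * ∑ e ∈ 𝒮, (Nv e).card :=
      hcard.trans (Nat.mul_le_mul_left _ step1)
    -- Step 3 : many s-sets have big degree
    set E : Finset (Finset ℕ) := 𝒮.filter (fun e => n ≤ 2 * k * (Nv e).card) with hE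
    have hdle : ∀ e, (Nv e).card ≤ n := by
      intro e
      calc (Nv e).card ≤ (Finset.range n).card := Finset.card_le_card (Finset.filter_subset _ _)
        _ = n := Finset.card_range n
    have h𝒮card : 𝒮.card ≤ n ^ s := by
      rw [h𝒮, Finset.card_powersetCard, Finset.card_range]
      exact Nat.choose_le_pow n s
    have step3 : n ^ s ≤ 2 * k * E.card := by
      have hsplit := Finset.sum_filter_add_sum_filter_not 𝒮 (fun e => n ≤ 2 * k * (Nv e).card)
        (fun e => (Nv e).card)
      have h1 : ∑ e ∈ E, (Nv e).card ≤ E.card * n := by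
        calc ∑ e ∈ E, (Nv e).card ≤ E.card • n :=
          Finset.sum_le_card_nsmul _ _ _ (fun e _ => hdle e)
        _ = E.card * n := by rw [smul_eq_mul]
      have h2 : 2 * k * ∑ e ∈ 𝒮.filter (fun e => ¬ (n ≤ 2 * k * (Nv e).card)), (Nv e).card
          ≤ n ^ s * n := by
        rw [Finset.mul_sum]
        calc ∑ e ∈ 𝒮.filter (fun e => ¬ (n ≤ 2 * k * (Nv e).card)), 2 * k * (Nv e).card
            ≤ (𝒮.filter (fun e => ¬ (n ≤ 2 * k * (Nv e).card))).card • n := by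
              apply Finset.sum_le_card_nsmul
              intro e he
              have := (Finset.mem_filter.1 he).2
              omega
          _ ≤ 𝒮.card * n := by
              rw [smul_eq_mul]
              exact Nat.mul_le_mul_right _ (Finset.card_le_card (Finset.filter_subset _ _))
          _ ≤ n ^ s * n := Nat.mul_le_mul_right _ h𝒮card
      -- combine
      have hc : 2 * (n ^ (s+1)) ≤ 2 * k * E.card * n + n ^ s * n := by
        calc 2 * (n ^ (s+1)) ≤ 2 * (k * ∑ e ∈ 𝒮, (Nv e).card) := by omega
          _ = 2 * k * (∑ e ∈ E, (Nv e).card)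
              + 2 * k * ∑ e ∈ 𝒮.filter (fun e => ¬ (n ≤ 2 * k * (Nv e).card)), (Nv e).card := by
              rw [← hsplit]; ring
          _ ≤ 2 * k * (E.card * n) + n ^ s * n := by
              have := Nat.mul_le_mul_left (2 * k) h1
              omega
          _ = 2 * k * E.card * n + n ^ s * n := by ring
      have hps : n ^ (s + 1) = n ^ s * n := pow_succ n s
      have : n ^ s * n ≤ 2 * k * E.card * n := by omega
      exact Nat.le_of_mul_le_mul_right this hnpos
    -- Step 4 : per-edge binomial bound
    have step4 : ∀ e ∈ E, n ^ t ≤ M * ((Nv e).card).choose t := by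
      intro e he
      have hdeg : n ≤ 2 * k * (Nv e).card := (Finset.mem_filter.1 he).2
      set d := (Nv e).card with hd
      have hd2t : 2 * t ≤ d := by nlinarith
      have htd : t ≤ d := by omega
      obtain ⟨d', hdd⟩ := Nat.exists_eq_add_of_le htd
      have hkey : n ≤ 4 * k * (d - t) := by
        have hdt : d - t = d' := by omega
        rw [hdt]
        nlinarith
      have h2 : n ^ t ≤ (4 * k) ^ t * (d - t) ^ t := by
        calc n ^ t ≤ (4 * k * (d - t)) ^ t := Nat.pow_le_pow_left hkey t
          _ = (4 * k) ^ t * (d - t) ^ t := mul_pow _ _ _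
      have h3 : (d - t) ^ t ≤ d.descFactorial t := by
        rw [Nat.descFactorial_eq_prod_range]
        calc (d - t) ^ t = ∏ _i ∈ Finset.range t, (d - t) := by
              rw [Finset.prod_const, Finset.card_range]
          _ ≤ ∏ i ∈ Finset.range t, (d - i) := by
              apply Finset.prod_le_prod'
              intro i hi
              have : i ≤ t := le_of_lt (Finset.mem_range.1 hi)
              omega
      have h4 : d.descFactorial t = t.factorial * d.choose t :=
        Nat.descFactorial_eq_factorial_mul_choose d t
      calc n ^ t ≤ (4 * k) ^ t * (d - t) ^ t := h2
        _ ≤ (4 * k) ^ t * (t.factorial * d.choose t) := by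
            rw [← h4]; exact Nat.mul_le_mul_left _ h3
        _ = M * d.choose t := by rw [hM]; ring
    -- Step 5 : double counting over t-sets
    set 𝒯 : Finset (Finset ℕ) := Finset.powersetCard t (Finset.range n) with h𝒯
    set D : Finset ℕ → Finset (Finset ℕ) := fun T => E.filter (fun e => T ⊆ Nv e) with hD
    have step5 : ∑ T ∈ 𝒯, (D T).card = ∑ e ∈ E, ((Nv e).card).choose t := by
      have h1 : ∀ T, (D T).card = ∑ e ∈ E, if T ⊆ Nv e then 1 else 0 := by
        intro T; rw [hD]; exact Finset.card_filter _ _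
      have h2 : ∀ e, (𝒯.filter (fun T => T ⊆ Nv e)) = Finset.powersetCard t (Nv e) := by
        intro e
        ext T
        simp only [Finset.mem_filter, h𝒯, Finset.mem_powersetCard]
        constructor
        · rintro ⟨⟨_, hTt⟩, hTN⟩; exact ⟨hTN, hTt⟩
        · rintro ⟨hTN, hTt⟩
          exact ⟨⟨hTN.trans (Finset.filter_subset _ _), hTt⟩, hTN⟩
      calc ∑ T ∈ 𝒯, (D T).card = ∑ T ∈ 𝒯, ∑ e ∈ E, if T ⊆ Nv e then 1 else 0 := by
            exact Finset.sum_congr rfl (fun T _ => h1 T)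
        _ = ∑ e ∈ E, ∑ T ∈ 𝒯, if T ⊆ Nv e then 1 else 0 := Finset.sum_comm
        _ = ∑ e ∈ E, (𝒯.filter (fun T => T ⊆ Nv e)).card := by
            exact Finset.sum_congr rfl (fun e _ => (Finset.card_filter _ _).symm)
        _ = ∑ e ∈ E, ((Nv e).card).choose t := by
            refine Finset.sum_congr rfl (fun e _ => ?_)
            rw [h2 e, Finset.card_powersetCard]
    -- Step 6 : find a good T
    have h𝒯card : 𝒯.card ≤ n ^ t := by
      rw [h𝒯, Finset.card_powersetCard, Finset.card_range]
      exact Nat.choose_le_pow n t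
    have h𝒯ne : 𝒯.Nonempty := by
      rw [h𝒯, Finset.powersetCard_nonempty, Finset.card_range]
      nlinarith
    have step6 : ∃ T ∈ 𝒯, n ^ s ≤ K1 * (D T).card := by
      apply Finset.exists_le_of_sum_le h𝒯ne
      have h6a : E.card * n ^ t ≤ ∑ e ∈ E, M * ((Nv e).card).choose t := by
        calc E.card * n ^ t = ∑ _e ∈ E, n ^ t := by rw [Finset.sum_const, smul_eq_mul]
          _ ≤ ∑ e ∈ E, M * ((Nv e).card).choose t := Finset.sum_le_sum step4
      calc ∑ _T ∈ 𝒯, n ^ s = 𝒯.card * n ^ s := by rw [Finset.sum_const, smul_eq_mul]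
        _ ≤ n ^ t * n ^ s := Nat.mul_le_mul_right _ h𝒯card
        _ = n ^ s * n ^ t := mul_comm _ _
        _ ≤ 2 * k * E.card * n ^ t := Nat.mul_le_mul_right _ step3
        _ = 2 * k * (E.card * n ^ t) := by ring
        _ ≤ 2 * k * ∑ e ∈ E, M * ((Nv e).card).choose t := Nat.mul_le_mul_left _ h6a
        _ = K1 * ∑ e ∈ E, ((Nv e).card).choose t := by
            rw [Finset.mul_sum, Finset.mul_sum]
            exact Finset.sum_congr rfl (fun e _ => by rw [hK1]; ring)
        _ = K1 * ∑ T ∈ 𝒯, (D T).card := by rw [step5]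
        _ = ∑ T ∈ 𝒯, K1 * (D T).card := Finset.mul_sum _ _ _
    obtain ⟨T, hT𝒯, hTbig⟩ := step6
    have hTmem := Finset.mem_powersetCard.1 hT𝒯
    -- Step 7 : apply induction hypothesis to D T
    obtain ⟨P, hPcard, hPdisj, hPtrans⟩ := hIH n hn1 (D T)
      (by
        intro e he
        have he' : e ∈ 𝒮 := Finset.filter_subset _ _ ((Finset.filter_subset _ _) he)
        exact ⟨(Finset.mem_powersetCard.1 he').2, (Finset.mem_powersetCard.1 he').1⟩)
      hTbig
    have hDprop : ∀ e ∈ D T, T ⊆ Nv e := fun e he => (Finset.mem_filter.1 he).2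
    have hPne : ∀ i, (P i).Nonempty := fun i => Finset.card_pos.1 (by rw [hPcard i]; omega)
    -- vertices of parts avoid T
    have hTP : ∀ i : Fin s, ∀ x ∈ P i, x ∉ T := by
      intro i x hx hxT
      classical
      set g0 : Fin s → ℕ := fun l => if h : l = i then x else (P l).min' (hPne l) with hg0def
      have hg0 : ∀ l, g0 l ∈ P l := by
        intro l
        by_cases h : l = i
        · subst h; simp only [hg0def, dif_pos rfl]; exact hx
        · simp only [hg0def, dif_neg h]; exact Finset.min'_mem _ _
      have hmem : Finset.image g0 Finset.univ ∈ D T := hPtrans g0 hg0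
      have hxin : x ∈ Finset.image g0 Finset.univ :=
        Finset.mem_image.2 ⟨i, Finset.mem_univ _, by simp [hg0def]⟩
      have hnv : x ∈ Nv (Finset.image g0 Finset.univ) := hDprop _ hmem hxT
      exact (Finset.mem_filter.1 hnv).2.1 hxin
    -- Step 8 : assemble
    refine ⟨Fin.cases T P, ?_, ?_, ?_⟩
    · intro i
      refine Fin.cases ?_ ?_ i
      · simpa using hTmem.2
      · intro i'; simp [hPcard i']
    · intro i j hij
      rcases Fin.eq_zero_or_eq_succ i with rfl | ⟨i', rfl⟩ <;>
        rcases Fin.eq_zero_or_eq_succ j with rfl | ⟨j', rfl⟩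
      · exact absurd rfl hij
      · simp only [Fin.cases_zero, Fin.cases_succ]
        exact Finset.disjoint_left.2 (fun x hxT hxP => hTP j' x hxP hxT)
      · simp only [Fin.cases_zero, Fin.cases_succ]
        exact Finset.disjoint_left.2 (fun x hxP hxT => hTP i' x hxP hxT)
      · simp only [Fin.cases_succ]
        exact hPdisj i' j' (fun h => hij (by rw [h]))
    · intro g hg
      set g' : Fin s → ℕ := fun i => g i.succ with hg'def
      have hg' : ∀ i, g' i ∈ P i := by
        intro i
        have := hg i.succ
        simpa [hg'def, Fin.cases_succ] using this
      have hDT : Finset.image g' Finset.univ ∈ D T := hPtrans g' hg'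
      have hg0T : g 0 ∈ T := by simpa using hg 0
      have hnv : g 0 ∈ Nv (Finset.image g' Finset.univ) := hDprop _ hDT hg0T
      have hins : insert (g 0) (Finset.image g' Finset.univ) ∈ H :=
        (Finset.mem_filter.1 hnv).2.2
      have himg : Finset.image g Finset.univ = insert (g 0) (Finset.image g' Finset.univ) := by
        rw [Fin.univ_succ, Finset.cons_eq_insert, Finset.image_insert,
          Finset.map_eq_image, Finset.image_image]
        rfl
      rwa [himg]



lemma copyCount_complete_le_H {r s n : ℕ} (hr : 1 ≤ r) (hrs : r ≤ s) {G : HG}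
    (hG : hsupp G ⊆ Finset.range n) :
    copyCount (completeHG r s) G ≤
      ((Finset.powersetCard s (Finset.range n)).filter
        (fun S => Finset.powersetCard r S ⊆ G)).card := by
  classical
  have key : ∀ K ∈ {K : HG | K ⊆ G ∧ IsCopy (completeHG r s) K},
      hsupp K ∈ ((Finset.powersetCard s (Finset.range n)).filter
        (fun S => Finset.powersetCard r S ⊆ G)) ∧ K = Finset.powersetCard r (hsupp K) := by
    rintro K ⟨hKG, hK⟩
    obtain ⟨S, hScard, rfl⟩ := isCopy_complete_iff hr hrs hK
    have hSs : hsupp (Finset.powersetCard r S) = S := hsupp_powersetCard hr (by omega)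
    rw [hSs]
    refine ⟨Finset.mem_filter.2 ⟨Finset.mem_powersetCard.2
      ⟨(hSs ▸ hsupp_mono hKG).trans hG, hScard⟩, hKG⟩, rfl⟩
  have hinj : Set.InjOn hsupp {K : HG | K ⊆ G ∧ IsCopy (completeHG r s) K} := by
    intro K hK K' hK' hKK'
    rw [(key K hK).2, (key K' hK').2, hKK']
  calc copyCount (completeHG r s) G
      = (hsupp '' {K : HG | K ⊆ G ∧ IsCopy (completeHG r s) K}).ncard :=
        (Set.ncard_image_of_injOn hinj).symm
    _ ≤ (((Finset.powersetCard s (Finset.range n)).filter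
        (fun S => Finset.powersetCard r S ⊆ G)) : Set (Finset ℕ)).ncard := by
        apply Set.ncard_le_ncard _ (Finset.finite_toSet _)
        rintro S ⟨K, hK, rfl⟩
        exact (key K hK).1
    _ = _ := Set.ncard_coe_finset _

section Coloring

lemma chromNum_le_of_coloring {F : HG} {s : ℕ} (c : ℕ → Fin s)
    (hc : ∀ e ∈ F, Set.InjOn c ↑e) : chromNum F ≤ s :=
  Nat.sInf_le ⟨c, hc⟩

lemma exists_coloring_of_chromNum_le {F : HG} {s : ℕ} (h : chromNum F ≤ s) :
    ∃ c : ℕ → Fin s, ∀ e ∈ F, Set.InjOn c ↑e := by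
  classical
  have hne : { k | ∃ c : ℕ → Fin k, ∀ e ∈ F, Set.InjOn c ↑e }.Nonempty := by
    refine ⟨(hsupp F).card + 1,
      fun v => if h : v ∈ hsupp F then
        Fin.castLE (Nat.le_succ _) ((hsupp F).equivFin ⟨v, h⟩) else 0, ?_⟩
    intro e he x hx y hy hxy
    have hxs : (x : ℕ) ∈ hsupp F := edge_subset_hsupp he hx
    have hys : (y : ℕ) ∈ hsupp F := edge_subset_hsupp he hy
    dsimp only at hxy
    rw [dif_pos hxs, dif_pos hys] at hxy
    have h2 : ((hsupp F).equivFin ⟨x, hxs⟩) = ((hsupp F).equivFin ⟨y, hys⟩) := by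
      have h3 := congrArg Fin.val hxy
      simp only [Fin.coe_castLE] at h3
      exact Fin.ext h3
    have := (hsupp F).equivFin.injective h2
    exact congrArg Subtype.val this
  have hmem : chromNum F ∈ { k | ∃ c : ℕ → Fin k, ∀ e ∈ F, Set.InjOn c ↑e } :=
    Nat.sInf_mem hne
  obtain ⟨c0, hc0⟩ := hmem
  refine ⟨fun v => Fin.castLE h (c0 v), fun e he x hx y hy hxy => ?_⟩
  apply hc0 e he hx hy
  have h3 := congrArg Fin.val hxy
  simp only [Fin.coe_castLE] at h3
  exact Fin.ext h3

end Coloring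

section Expansion

/-- The hyperedge of `expansion r F` corresponding to the edge `e` of `F`. -/
def expEdge (r : ℕ) (e : Finset ℕ) : Finset ℕ :=
  e.image (fun v => Nat.pair 0 v) ∪
    (Finset.range (r-2)).image (fun j => Nat.pair 1 (Nat.pair (Encodable.encode e) j))

lemma expansion_eq (r : ℕ) (F : HG) : expansion r F = F.image (expEdge r) := rfl

lemma expEdge_mem {r : ℕ} {F : HG} {e : Finset ℕ} (he : e ∈ F) :
    expEdge r e ∈ expansion r F :=
  Finset.mem_image.2 ⟨e, he, rfl⟩

lemma pair0_mem_expEdge {r : ℕ} {e : Finset ℕ} {v : ℕ} (hv : v ∈ e) :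
    Nat.pair 0 v ∈ expEdge r e :=
  Finset.mem_union_left _ (Finset.mem_image.2 ⟨v, hv, rfl⟩)

lemma pair0_mem_hsupp_expansion {r : ℕ} {F : HG} {e : Finset ℕ} {v : ℕ}
    (he : e ∈ F) (hv : v ∈ e) : Nat.pair 0 v ∈ hsupp (expansion r F) :=
  edge_subset_hsupp (expEdge_mem he) (pair0_mem_expEdge hv)

end Expansion

section TuranConstruction

variable {r n s : ℕ}

lemma turanHG_uniform : Uniform r (turanHG r n s) := fun e he =>
  (Finset.mem_powersetCard.1 (Finset.mem_filter.1 he).1).2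

lemma turanHG_subset_range {e : Finset ℕ} (he : e ∈ turanHG r n s) : e ⊆ Finset.range n :=
  (Finset.mem_powersetCard.1 (Finset.mem_filter.1 he).1).1

lemma turanHG_hsupp : hsupp (turanHG r n s) ⊆ Finset.range n := by
  intro v hv
  obtain ⟨e, he, hve⟩ := mem_hsupp.1 hv
  exact turanHG_subset_range he hve

lemma turanHG_prop {e : Finset ℕ} (he : e ∈ turanHG r n s) :
    ∀ i ∈ e, ∀ j ∈ e, i % s = j % s → i = j :=
  (Finset.mem_filter.1 he).2

lemma turanHG_free {F : HG} (hs : 1 ≤ s) (hχ : s < chromNum F) :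
    ¬ Contains (turanHG r n s) (expansion r F) := by
  rintro ⟨K, hKG, f, hf, hemap⟩
  have hcol : ∀ e ∈ F, Set.InjOn (fun v => (⟨f (Nat.pair 0 v) % s,
      Nat.mod_lt _ (by omega)⟩ : Fin s)) ↑e := by
    intro e he u hu v hv huv
    simp only [Fin.mk.injEq] at huv
    have hEx : (expEdge r e).image f ∈ turanHG r n s := by
      apply hKG
      rw [← hemap]
      exact Finset.mem_image.2 ⟨expEdge r e, expEdge_mem he, rfl⟩
    have hu' : f (Nat.pair 0 u) ∈ (expEdge r e).image f :=
      Finset.mem_image.2 ⟨_, pair0_mem_expEdge hu, rfl⟩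
    have hv' : f (Nat.pair 0 v) ∈ (expEdge r e).image f :=
      Finset.mem_image.2 ⟨_, pair0_mem_expEdge hv, rfl⟩
    have heq : f (Nat.pair 0 u) = f (Nat.pair 0 v) :=
      turanHG_prop hEx _ hu' _ hv' huv
    have := hf (pair0_mem_hsupp_expansion he hu) (pair0_mem_hsupp_expansion he hv) heq
    exact (Nat.pair_eq_pair.1 this).2
  exact absurd (chromNum_le_of_coloring _ hcol) (by omega)

lemma turanHG_copies (hr : 1 ≤ r) (hrs : r ≤ s) (hns : s * (n / s) ≤ n) (hs : 1 ≤ s) :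
    (n / s) ^ s ≤ copyCount (completeHG r s) (turanHG r n s) := by
  classical
  set m := n / s with hm
  set tset : (Fin s → Fin m) → Finset ℕ :=
    fun a => Finset.image (fun i : Fin s => (i : ℕ) + s * (a i)) Finset.univ with htset
  have hmod : ∀ (a : Fin s → Fin m) (i : Fin s), ((i : ℕ) + s * (a i)) % s = (i : ℕ) := by
    intro a i
    rw [Nat.add_mul_mod_self_left]
    exact Nat.mod_eq_of_lt i.isLt
  have hlt : ∀ (a : Fin s → Fin m) (i : Fin s), (i : ℕ) + s * (a i) < n := by
    intro a i
    have h1 : (i : ℕ) < s := i.isLt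
    have h2 : (a i : ℕ) < m := (a i).isLt
    have h3 : s * ((a i : ℕ) + 1) ≤ s * m := Nat.mul_le_mul_left _ (by omega)
    have h4 : s * ((a i : ℕ) + 1) = s * (a i : ℕ) + s := by ring
    omega
  have hinj : ∀ a : Fin s → Fin m,
      Set.InjOn (fun i : Fin s => (i : ℕ) + s * (a i)) ↑(Finset.univ : Finset (Fin s)) := by
    intro a i _ j _ hij
    have : ((i : ℕ) + s * (a i)) % s = ((j : ℕ) + s * (a j)) % s := congrArg (· % s) hij
    rw [hmod a i, hmod a j] at this
    have hval : (i : ℕ) = (j : ℕ) := this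
    exact Fin.ext hval
  have htcard : ∀ a, (tset a).card = s := by
    intro a
    rw [htset, Finset.card_image_of_injOn (hinj a), Finset.card_univ, Fintype.card_fin]
  have htmem : ∀ a, ∀ x ∈ tset a, ∃ i : Fin s, x = (i : ℕ) + s * (a i) := by
    intro a x hx
    obtain ⟨i, _, rfl⟩ := Finset.mem_image.1 hx
    exact ⟨i, rfl⟩
  have htsub : ∀ a, tset a ⊆ Finset.range n := by
    intro a x hx
    obtain ⟨i, rfl⟩ := htmem a x hx
    exact Finset.mem_range.2 (hlt a i)
  -- all r-subsets of tset a are edges of the Turán graph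
  have hedge : ∀ a, ∀ e ∈ Finset.powersetCard r (tset a), e ∈ turanHG r n s := by
    intro a e he
    obtain ⟨hesub, hecard⟩ := Finset.mem_powersetCard.1 he
    refine Finset.mem_filter.2 ⟨Finset.mem_powersetCard.2 ⟨hesub.trans (htsub a), hecard⟩, ?_⟩
    intro x hx y hy hxy
    obtain ⟨i, rfl⟩ := htmem a x (hesub hx)
    obtain ⟨j, rfl⟩ := htmem a y (hesub hy)
    rw [hmod a i, hmod a j] at hxy
    rw [Fin.ext hxy]
  -- tset a is determined by a
  have htinj : Function.Injective tset := by
    intro a b hab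
    funext i
    have hmemi : (i : ℕ) + s * (a i) ∈ tset b := by
      rw [← hab]; exact Finset.mem_image.2 ⟨i, Finset.mem_univ _, rfl⟩
    obtain ⟨j, hj⟩ := htmem b _ hmemi
    have hij : (i : ℕ) = (j : ℕ) := by
      have : ((i : ℕ) + s * (a i)) % s = ((j : ℕ) + s * (b j)) % s := by rw [hj]
      rwa [hmod a i, hmod b j] at this
    have : s * (a i : ℕ) = s * (b j : ℕ) := by omega
    have hval : (a i : ℕ) = (b j : ℕ) := Nat.eq_of_mul_eq_mul_left (by omega) this
    have hji : j = i := Fin.ext hij.symm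
    subst hji
    exact Fin.ext hval
  -- the copies
  set KK : (Fin s → Fin m) → HG := fun a => Finset.powersetCard r (tset a) with hKK
  have hcopy : ∀ a, KK a ⊆ turanHG r n s ∧ IsCopy (completeHG r s) (KK a) := by
    intro a
    constructor
    · intro e he; exact hedge a e he
    · refine ⟨fun x => if h : x < s then (x : ℕ) + s * (a ⟨x, h⟩ : Fin m).val else x, ?_, ?_⟩
      · have hsuppC : hsupp (completeHG r s) = Finset.range s :=
          hsupp_powersetCard hr (by simpa using hrs)
        rw [hsuppC]
        intro x hx y hy hxy
        have hxs : x < s := Finset.mem_range.1 (by exact_mod_cast hx)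
        have hys : y < s := Finset.mem_range.1 (by exact_mod_cast hy)
        dsimp only at hxy
        rw [dif_pos hxs, dif_pos hys] at hxy
        have := hinj a (Finset.mem_coe.2 (Finset.mem_univ ⟨x, hxs⟩))
          (Finset.mem_coe.2 (Finset.mem_univ ⟨y, hys⟩)) (by simpa using hxy)
        simpa [Fin.ext_iff] using this
      · have hsuppC : hsupp (completeHG r s) = Finset.range s :=
          hsupp_powersetCard hr (by simpa using hrs)
        have hinj' : Set.InjOn (fun x => if h : x < s then (x : ℕ) + s * (a ⟨x, h⟩ : Fin m).val else x)
            ↑(Finset.range s) := by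
          intro x hx y hy hxy
          have hxs : x < s := Finset.mem_range.1 (by exact_mod_cast hx)
          have hys : y < s := Finset.mem_range.1 (by exact_mod_cast hy)
          dsimp only at hxy
          rw [dif_pos hxs, dif_pos hys] at hxy
          have := hinj a (Finset.mem_coe.2 (Finset.mem_univ ⟨x, hxs⟩))
            (Finset.mem_coe.2 (Finset.mem_univ ⟨y, hys⟩)) (by simpa using hxy)
          simpa [Fin.ext_iff] using this
        rw [emap, completeHG, image_powersetCard hinj', hKK]
        congr 1
        ext z
        simp only [Finset.mem_image, Finset.mem_range, htset, Finset.mem_univ, true_and]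
        constructor
        · rintro ⟨x, hxs, rfl⟩
          exact ⟨⟨x, hxs⟩, by rw [dif_pos hxs]⟩
        · rintro ⟨i, hi⟩
          exact ⟨(i : ℕ), i.isLt, by rw [dif_pos i.isLt]; exact hi⟩
  have hKKinj : Function.Injective KK := by
    intro a b hab
    apply htinj
    have hta : hsupp (KK a) = tset a := hsupp_powersetCard hr (by rw [htcard a]; exact hrs)
    have htb : hsupp (KK b) = tset b := hsupp_powersetCard hr (by rw [htcard b]; exact hrs)
    rw [← hta, ← htb, hab]
  -- count
  have hfin : {K : HG | K ⊆ turanHG r n s ∧ IsCopy (completeHG r s) K}.Finite := by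
    apply Set.Finite.subset ((turanHG r n s).powerset.finite_toSet)
    intro K hK
    exact Finset.mem_coe.2 (Finset.mem_powerset.2 hK.1)
  calc (n / s) ^ s = ((Finset.univ : Finset (Fin s → Fin m)).image KK).card := by
        rw [Finset.card_image_of_injective _ hKKinj, Finset.card_univ, Fintype.card_fun,
          Fintype.card_fin, Fintype.card_fin]
    _ = (↑((Finset.univ : Finset (Fin s → Fin m)).image KK) : Set HG).ncard :=
        (Set.ncard_coe_finset _).symm
    _ ≤ copyCount (completeHG r s) (turanHG r n s) := by
        apply Set.ncard_le_ncard _ hfin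
        intro K hK
        obtain ⟨a, _, rfl⟩ := Finset.mem_image.1 (Finset.mem_coe.1 hK)
        exact hcopy a

end TuranConstruction


section Embedding

lemma pair0_injective : Function.Injective (fun v => Nat.pair 0 v) :=
  fun a b h => (Nat.pair_eq_pair.1 h).2

lemma card_expEdge {r : ℕ} (hr : 2 ≤ r) {e : Finset ℕ} (he : e.card = 2) :
    (expEdge r e).card = r := by
  have hdisj : Disjoint (e.image (fun v => Nat.pair 0 v))
      ((Finset.range (r-2)).image (fun j => Nat.pair 1 (Nat.pair (Encodable.encode e) j))) := by
    rw [Finset.disjoint_left]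
    rintro x hx1 hx2
    obtain ⟨v, _, rfl⟩ := Finset.mem_image.1 hx1
    obtain ⟨j, _, hj⟩ := Finset.mem_image.1 hx2
    exact absurd (Nat.pair_eq_pair.1 hj).1 (by omega)
  have h1 : (e.image (fun v => Nat.pair 0 v)).card = 2 := by
    rw [Finset.card_image_of_injective _ pair0_injective, he]
  have h2 : ((Finset.range (r-2)).image
      (fun j => Nat.pair 1 (Nat.pair (Encodable.encode e) j))).card = r - 2 := by
    rw [Finset.card_image_of_injective _
      (fun a b h => (Nat.pair_eq_pair.1 (Nat.pair_eq_pair.1 h).2).2), Finset.card_range]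
  rw [expEdge, Finset.card_union_of_disjoint hdisj, h1, h2]
  omega

lemma contains_expansion_of_many {r s : ℕ} (hr : 2 ≤ r) (hrs : r ≤ s) {F : HG}
    (hF : Uniform 2 F) (hchr : chromNum F ≤ s) (k : ℕ) (hk : 1 ≤ k) :
    ∃ n0 : ℕ, 1 ≤ n0 ∧ ∀ n, n0 ≤ n → ∀ G : HG, Uniform r G → hsupp G ⊆ Finset.range n →
      n ^ s ≤ k * copyCount (completeHG r s) G → Contains G (expansion r F) := by
  classical
  obtain ⟨c, hc⟩ := exists_coloring_of_chromNum_le hchr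
  set m0 := (hsupp F).card with hm0
  set q := (r - 2) * F.card with hq
  set t := m0 + q + 1 with htdef
  obtain ⟨n0, hn01, hbox⟩ := box t (by omega) s k hk
  refine ⟨n0, hn01, fun n hn G hGU hGsupp hbig => ?_⟩
  set H := (Finset.powersetCard s (Finset.range n)).filter
    (fun S => Finset.powersetCard r S ⊆ G) with hH
  have hHcard : n ^ s ≤ k * H.card := by
    calc n ^ s ≤ k * copyCount (completeHG r s) G := hbig
      _ ≤ k * H.card := Nat.mul_le_mul_left _ (copyCount_complete_le_H (by omega) hrs hGsupp)
  obtain ⟨P, hPcard, hPdisj, hPtrans⟩ := hbox n hn H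
    (fun S hS => ⟨(Finset.mem_powersetCard.1 (Finset.mem_filter.1 hS).1).2,
                  (Finset.mem_powersetCard.1 (Finset.mem_filter.1 hS).1).1⟩) hHcard
  -- index functions
  set idx : ℕ → ℕ :=
    fun v => if h : v ∈ hsupp F then ((hsupp F).equivFin ⟨v, h⟩ : ℕ) else 0 with hidx
  set eidx : Finset ℕ → ℕ :=
    fun e => if h : e ∈ F then (F.equivFin ⟨e, h⟩ : ℕ) else 0 with heidx
  set pick : Fin s → ℕ → ℕ := fun i j =>
    if h : j < (P i).card then (((P i).equivFin.symm ⟨j, h⟩ : {x // x ∈ P i}) : ℕ) else 0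
    with hpick
  have hpickmem : ∀ (i : Fin s) (j : ℕ), j < t → pick i j ∈ P i := by
    intro i j hj
    have hj' : j < (P i).card := by rw [hPcard i]; exact hj
    simp only [hpick, dif_pos hj']
    exact ((P i).equivFin.symm ⟨j, hj'⟩).2
  have hpickinj : ∀ (i : Fin s) (j j' : ℕ), j < t → j' < t → pick i j = pick i j' → j = j' := by
    intro i j j' hj hj' heq
    have hj1 : j < (P i).card := by rw [hPcard i]; exact hj
    have hj'1 : j' < (P i).card := by rw [hPcard i]; exact hj'
    simp only [hpick, dif_pos hj1, dif_pos hj'1] at heq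
    have h2 : ((P i).equivFin.symm ⟨j, hj1⟩) = ((P i).equivFin.symm ⟨j', hj'1⟩) :=
      Subtype.ext heq
    exact congrArg Fin.val ((P i).equivFin.symm.injective h2)
  have hidxlt : ∀ v ∈ hsupp F, idx v < m0 := by
    intro v hv
    simp only [hidx, dif_pos hv]
    exact ((hsupp F).equivFin ⟨v, hv⟩).isLt
  have hidxinj : ∀ v ∈ hsupp F, ∀ w ∈ hsupp F, idx v = idx w → v = w := by
    intro v hv w hw hvw
    simp only [hidx, dif_pos hv, dif_pos hw] at hvw
    exact congrArg Subtype.val ((hsupp F).equivFin.injective (Fin.ext hvw))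
  have heidxlt : ∀ e ∈ F, eidx e < F.card := by
    intro e he
    simp only [heidx, dif_pos he]
    exact (F.equivFin ⟨e, he⟩).isLt
  have heidxinj : ∀ e ∈ F, ∀ e' ∈ F, eidx e = eidx e' → e = e' := by
    intro e he e' he' hee
    simp only [heidx, dif_pos he, dif_pos he'] at hee
    exact congrArg Subtype.val (F.equivFin.injective (Fin.ext hee))
  -- part chooser avoiding endpoint colours
  set avoid : Finset ℕ → Finset (Fin s) := fun e => Finset.univ \ e.image c with havoid
  have havoidcard : ∀ e ∈ F, r - 2 ≤ (avoid e).card := by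
    intro e he
    have h1 : (e.image c).card ≤ 2 := le_trans Finset.card_image_le (le_of_eq (hF e he))
    have h2 : (avoid e).card = s - (e.image c).card := by
      rw [havoid]
      rw [Finset.card_sdiff_of_subset (Finset.subset_univ _), Finset.card_univ, Fintype.card_fin]
    omega
  set pt : Finset ℕ → ℕ → Fin s := fun e j =>
    if h : j < (avoid e).card then (((avoid e).equivFin.symm ⟨j, h⟩ : {x // x ∈ avoid e}) : Fin s)
    else ⟨0, by omega⟩ with hpt
  have hptmem : ∀ e ∈ F, ∀ j, j < r - 2 → pt e j ∈ avoid e := by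
    intro e he j hj
    have hj' : j < (avoid e).card := lt_of_lt_of_le hj (havoidcard e he)
    simp only [hpt, dif_pos hj']
    exact ((avoid e).equivFin.symm ⟨j, hj'⟩).2
  have hptinj : ∀ e ∈ F, ∀ j j', j < r - 2 → j' < r - 2 → pt e j = pt e j' → j = j' := by
    intro e he j j' hj hj' heq
    have hj1 : j < (avoid e).card := lt_of_lt_of_le hj (havoidcard e he)
    have hj'1 : j' < (avoid e).card := lt_of_lt_of_le hj' (havoidcard e he)
    simp only [hpt, dif_pos hj1, dif_pos hj'1] at heq
    have h2 : ((avoid e).equivFin.symm ⟨j, hj1⟩) = ((avoid e).equivFin.symm ⟨j', hj'1⟩) :=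
      Subtype.ext heq
    exact congrArg Fin.val ((avoid e).equivFin.symm.injective h2)
  -- index of expansion vertices
  set I : Finset ℕ → ℕ → ℕ := fun e j => m0 + (r - 2) * eidx e + j with hI
  have hIlt : ∀ e ∈ F, ∀ j, j < r - 2 → I e j < t := by
    intro e he j hj
    have h1 : (r - 2) * (eidx e + 1) ≤ (r - 2) * F.card :=
      Nat.mul_le_mul_left _ (heidxlt e he)
    have h2 : (r - 2) * (eidx e + 1) = (r - 2) * eidx e + (r - 2) := by ring
    simp only [hI, htdef, hq]
    linarith
  have hIge : ∀ e j, m0 ≤ I e j := by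
    intro e j
    simp only [hI]
    exact le_trans (Nat.le_add_right m0 _) (Nat.le_add_right _ j)
  have hIinj : ∀ e ∈ F, ∀ e' ∈ F, ∀ j j', j < r - 2 → j' < r - 2 → I e j = I e' j' →
      e = e' ∧ j = j' := by
    intro e he e' he' j j' hj hj' heq
    simp only [hI] at heq
    rw [Nat.add_assoc, Nat.add_assoc] at heq
    have heq2 : (r - 2) * eidx e + j = (r - 2) * eidx e' + j' := Nat.add_left_cancel heq
    have hjj : j = j' := by
      have h1 := congrArg (· % (r - 2)) heq2
      simp only [Nat.mul_add_mod] at h1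
      rwa [Nat.mod_eq_of_lt hj, Nat.mod_eq_of_lt hj'] at h1
    subst hjj
    have h2 : (r - 2) * eidx e = (r - 2) * eidx e' := Nat.add_right_cancel heq2
    have h3 : eidx e = eidx e' := Nat.eq_of_mul_eq_mul_left (by omega) h2
    exact ⟨heidxinj e he e' he' h3, rfl⟩
  -- the embedding
  set f : ℕ → ℕ := fun x =>
    if (Nat.unpair x).1 = 0 then pick (c (Nat.unpair x).2) (idx (Nat.unpair x).2)
    else match Encodable.decode (α := Finset ℕ) (Nat.unpair (Nat.unpair x).2).1 with
      | some e => pick (pt e (Nat.unpair (Nat.unpair x).2).2) (I e (Nat.unpair (Nat.unpair x).2).2)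
      | none => 0
    with hf
  have hfV : ∀ v, f (Nat.pair 0 v) = pick (c v) (idx v) := by
    intro v
    simp [hf, Nat.unpair_pair]
  have hfE : ∀ (e : Finset ℕ) (j : ℕ),
      f (Nat.pair 1 (Nat.pair (Encodable.encode e) j)) = pick (pt e j) (I e j) := by
    intro e j
    simp [hf, Nat.unpair_pair, Encodable.encodek]
  -- support characterization
  have hsuppchar : ∀ x ∈ hsupp (expansion r F),
      (∃ v ∈ hsupp F, x = Nat.pair 0 v) ∨
      (∃ e ∈ F, ∃ j, j < r - 2 ∧ x = Nat.pair 1 (Nat.pair (Encodable.encode e) j)) := by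
    intro x hx
    obtain ⟨E, hE, hxE⟩ := mem_hsupp.1 hx
    rw [expansion_eq] at hE
    obtain ⟨e, he, rfl⟩ := Finset.mem_image.1 hE
    rw [expEdge] at hxE
    rcases Finset.mem_union.1 hxE with h | h
    · obtain ⟨v, hv, rfl⟩ := Finset.mem_image.1 h
      exact Or.inl ⟨v, edge_subset_hsupp he hv, rfl⟩
    · obtain ⟨j, hj, rfl⟩ := Finset.mem_image.1 h
      exact Or.inr ⟨e, he, j, Finset.mem_range.1 hj, rfl⟩
  have hVmem : ∀ v ∈ hsupp F, f (Nat.pair 0 v) ∈ P (c v) := by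
    intro v hv
    rw [hfV]
    exact hpickmem _ _ (by have := hidxlt v hv; omega)
  have hEmem : ∀ e ∈ F, ∀ j, j < r - 2 →
      f (Nat.pair 1 (Nat.pair (Encodable.encode e) j)) ∈ P (pt e j) := by
    intro e he j hj
    rw [hfE]
    exact hpickmem _ _ (hIlt e he j hj)
  -- injectivity on the support
  have hfinj : Set.InjOn f ↑(hsupp (expansion r F)) := by
    intro x hx y hy hxy
    rcases hsuppchar x hx with ⟨v, hv, rfl⟩ | ⟨e, he, j, hj, rfl⟩ <;>
      rcases hsuppchar y hy with ⟨w, hw, rfl⟩ | ⟨e', he', j', hj', rfl⟩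
    · -- vertex / vertex
      have hcc : c v = c w := by
        by_contra hne
        exact Finset.disjoint_left.1 (hPdisj _ _ hne) (hVmem v hv) (hxy ▸ hVmem w hw)
      rw [hfV, hfV, hcc] at hxy
      have hvw := hpickinj (c w) _ _ (by have := hidxlt v hv; omega)
        (by have := hidxlt w hw; omega) hxy
      rw [hidxinj v hv w hw hvw]
    · -- vertex / expansion
      exfalso
      have hcc : c v = pt e' j' := by
        by_contra hne
        exact Finset.disjoint_left.1 (hPdisj _ _ hne) (hVmem v hv)
          (hxy ▸ hEmem e' he' j' hj')
      rw [hfV, hfE, hcc] at hxy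
      have h2 := hpickinj _ _ _ (by have := hidxlt v hv; omega) (hIlt e' he' j' hj') hxy
      have h3 := hidxlt v hv
      have h4 := hIge e' j'
      omega
    · -- expansion / vertex
      exfalso
      have hcc : pt e j = c w := by
        by_contra hne
        exact Finset.disjoint_left.1 (hPdisj _ _ hne) (hEmem e he j hj)
          (hxy ▸ hVmem w hw)
      rw [hfV, hfE, hcc] at hxy
      have h2 := hpickinj _ _ _ (hIlt e he j hj) (by have := hidxlt w hw; omega) hxy
      have h3 := hidxlt w hw
      have h4 := hIge e j
      omega
    · -- expansion / expansion
      have hcc : pt e j = pt e' j' := by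
        by_contra hne
        exact Finset.disjoint_left.1 (hPdisj _ _ hne) (hEmem e he j hj)
          (hxy ▸ hEmem e' he' j' hj')
      rw [hfE, hfE, hcc] at hxy
      have hII := hpickinj _ _ _ (hIlt e he j hj) (hIlt e' he' j' hj') hxy
      obtain ⟨rfl, rfl⟩ := hIinj e he e' he' j j' hj hj' hII
      rfl
  -- every image edge lies in G
  have hedge : ∀ e ∈ F, (expEdge r e).image f ∈ G := by
    intro e he
    obtain ⟨u, v, huv, he2⟩ := Finset.card_eq_two.1 (hF e he)
    have hu : u ∈ e := by rw [he2]; exact Finset.mem_insert_self _ _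
    have hv : v ∈ e := by rw [he2]; exact Finset.mem_insert_of_mem (Finset.mem_singleton_self _)
    have huV : u ∈ hsupp F := edge_subset_hsupp he hu
    have hvV : v ∈ hsupp F := edge_subset_hsupp he hv
    have hcuv : c u ≠ c v := fun h =>
      huv (hc e he (Finset.mem_coe.2 hu) (Finset.mem_coe.2 hv) h)
    set g : Fin s → ℕ := fun i =>
      if i = c u then f (Nat.pair 0 u)
      else if i = c v then f (Nat.pair 0 v)
      else if h : ∃ j0 : Fin (r - 2), pt e (j0 : ℕ) = i then
        pick i (I e ((Classical.choose h : Fin (r - 2)) : ℕ))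
      else pick i 0 with hg
    have hgmem : ∀ i, g i ∈ P i := by
      intro i
      simp only [hg]
      split_ifs with h1 h2 h3
      · rw [h1]; exact hVmem u huV
      · rw [h2]; exact hVmem v hvV
      · exact hpickmem _ _ (hIlt e he _ (Classical.choose h3).isLt)
      · exact hpickmem _ _ (by omega)
    have hgH : Finset.image g Finset.univ ∈ H := hPtrans g hgmem
    have hgsub : Finset.powersetCard r (Finset.image g Finset.univ) ⊆ G :=
      (Finset.mem_filter.1 hgH).2
    have hsubset : (expEdge r e).image f ⊆ Finset.image g Finset.univ := by
      intro x hx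
      obtain ⟨y, hy, rfl⟩ := Finset.mem_image.1 hx
      rw [expEdge] at hy
      rcases Finset.mem_union.1 hy with h | h
      · obtain ⟨w, hw, rfl⟩ := Finset.mem_image.1 h
        have hw2 : w = u ∨ w = v := by rw [he2] at hw; simpa using hw
        rcases hw2 with rfl | rfl
        · refine Finset.mem_image.2 ⟨c w, Finset.mem_univ _, ?_⟩
          simp [hg]
        · refine Finset.mem_image.2 ⟨c w, Finset.mem_univ _, ?_⟩
          simp [hg, Ne.symm hcuv]
      · obtain ⟨j, hjr, rfl⟩ := Finset.mem_image.1 h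
        have hjr' : j < r - 2 := Finset.mem_range.1 hjr
        have hiavoid : pt e j ∈ avoid e := hptmem e he j hjr'
        have hnotmem : pt e j ∉ e.image c := (Finset.mem_sdiff.1 hiavoid).2
        have hiu : pt e j ≠ c u := fun hcon =>
          hnotmem (hcon ▸ Finset.mem_image.2 ⟨u, hu, rfl⟩)
        have hiv : pt e j ≠ c v := fun hcon =>
          hnotmem (hcon ▸ Finset.mem_image.2 ⟨v, hv, rfl⟩)
        have hex : ∃ j0 : Fin (r - 2), pt e (j0 : ℕ) = pt e j := ⟨⟨j, hjr'⟩, rfl⟩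
        refine Finset.mem_image.2 ⟨pt e j, Finset.mem_univ _, ?_⟩
        simp only [hg]
        rw [if_neg hiu, if_neg hiv, dif_pos hex]
        have hjeq : ((Classical.choose hex : Fin (r - 2)) : ℕ) = j :=
          hptinj e he _ _ (Classical.choose hex).isLt hjr' (Classical.choose_spec hex)
        rw [hjeq, hfE]
    have hcardim : ((expEdge r e).image f).card = r := by
      have hsub : (expEdge r e) ⊆ hsupp (expansion r F) := edge_subset_hsupp (expEdge_mem he)
      rw [Finset.card_image_of_injOn (hfinj.mono (by exact_mod_cast hsub))]
      exact card_expEdge hr (hF e he)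
    exact hgsub (Finset.mem_powersetCard.2 ⟨hsubset, hcardim⟩)
  refine ⟨emap f (expansion r F), ?_, f, hfinj, rfl⟩
  intro E hE
  obtain ⟨E0, hE0, rfl⟩ := Finset.mem_image.1 hE
  rw [expansion_eq] at hE0
  obtain ⟨e, he, rfl⟩ := Finset.mem_image.1 hE0
  exact hedge e he

end Embedding


section Glue

lemma exCount_bddAbove (r s n : ℕ) (hr : 1 ≤ r) (hrs : r ≤ s) (F' : HG) :
    (n ^ s) ∈ upperBounds { m | ∃ G : HG, Uniform r G ∧ hsupp G ⊆ Finset.range n ∧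
      ¬ Contains G F' ∧ m = copyCount (completeHG r s) G } := by
  rintro m ⟨G, _, hGsupp, _, rfl⟩
  exact (copyCount_complete_le hr hrs hGsupp).trans (Nat.choose_le_pow n s)

lemma exCount_le_pow (r s n : ℕ) (hr : 1 ≤ r) (hrs : r ≤ s) (F' : HG) :
    exCount r n (completeHG r s) F' ≤ n ^ s :=
  csSup_le' (exCount_bddAbove r s n hr hrs F')

lemma le_exCount (r s n : ℕ) (hr : 1 ≤ r) (hrs : r ≤ s) (F' : HG) {G : HG}
    (hGU : Uniform r G) (hGsupp : hsupp G ⊆ Finset.range n) (hfree : ¬ Contains G F') :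
    copyCount (completeHG r s) G ≤ exCount r n (completeHG r s) F' :=
  le_csSup ⟨n ^ s, exCount_bddAbove r s n hr hrs F'⟩ ⟨G, hGU, hGsupp, hfree, rfl⟩

end Glue

-- AUX MARKER

/-- For `s ≥ r ≥ 2` and a graph `F`, the generalized Turán number
`ex_r(n, K_s^{(r)}, F^r)` is `Θ(n^s)` if and only if `χ(F) > s`. -/
theorem stmt0 (r s : ℕ) (hr : 2 ≤ r) (hrs : r ≤ s) (F : HG) (hF : Uniform 2 F) :
    (∃ c1 c2 : ℝ, 0 < c1 ∧ 0 < c2 ∧ ∃ N : ℕ, ∀ n : ℕ, N ≤ n →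
      c1 * (n : ℝ) ^ s ≤ (exCount r n (completeHG r s) (expansion r F) : ℝ) ∧
      (exCount r n (completeHG r s) (expansion r F) : ℝ) ≤ c2 * (n : ℝ) ^ s) ↔
    s < chromNum F := by
  constructor
  · rintro ⟨c1, c2, hc1, hc2, N, hbnd⟩
    by_contra hchr
    push_neg at hchr
    obtain ⟨k, hk⟩ := exists_nat_ge (1 / c1)
    have hk'1 : 1 ≤ k + 1 := Nat.le_add_left 1 k
    obtain ⟨n0, hn01, hmain⟩ := contains_expansion_of_many hr hrs hF hchr (k + 1) hk'1
    set n := max N n0 with hn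
    have hnN : N ≤ n := le_max_left _ _
    have hnn0 : n0 ≤ n := le_max_right _ _
    have hn1 : 1 ≤ n := le_trans hn01 hnn0
    obtain ⟨hlow, _⟩ := hbnd n hnN
    have hnpow : (0:ℝ) < (n:ℝ) ^ s := by
      have : (0:ℝ) < (n:ℝ) := by exact_mod_cast hn1
      positivity
    have hpos : 0 < exCount r n (completeHG r s) (expansion r F) := by
      by_contra h
      push_neg at h
      have h0 : exCount r n (completeHG r s) (expansion r F) = 0 := by omega
      rw [h0] at hlow
      norm_num at hlow
      nlinarith
    set SS := { m | ∃ G : HG, Uniform r G ∧ hsupp G ⊆ Finset.range n ∧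
      ¬ Contains G (expansion r F) ∧ m = copyCount (completeHG r s) G } with hSS
    have hSSne : SS.Nonempty := by
      rcases Set.eq_empty_or_nonempty SS with h | h
      · exfalso
        have : exCount r n (completeHG r s) (expansion r F) = 0 := by
          rw [exCount, ← hSS, h, csSup_empty]
          rfl
        omega
      · exact h
    have hbdd : BddAbove SS := ⟨n ^ s, exCount_bddAbove r s n (by omega) hrs _⟩
    have hmem : exCount r n (completeHG r s) (expansion r F) ∈ SS := Nat.sSup_mem hSSne hbdd
    obtain ⟨G, hGU, hGsupp, hGfree, hGeq⟩ := hmem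
    have hlow' : c1 * (n:ℝ) ^ s ≤ (copyCount (completeHG r s) G : ℝ) := by
      rw [← hGeq]; exact hlow
    have hc1k : 1 ≤ c1 * ((k:ℝ) + 1) := by
      rw [div_le_iff₀ hc1] at hk
      nlinarith
    have hkey : ((n:ℝ)) ^ s ≤ ((k:ℝ) + 1) * (copyCount (completeHG r s) G : ℝ) := by
      have h2 : ((k:ℝ) + 1) * (c1 * (n:ℝ) ^ s) ≤ ((k:ℝ) + 1) * (copyCount (completeHG r s) G : ℝ) := by
        apply mul_le_mul_of_nonneg_left hlow'
        positivity
      nlinarith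
    have hkey' : n ^ s ≤ (k + 1) * copyCount (completeHG r s) G := by
      exact_mod_cast hkey
    exact hGfree (hmain n hnn0 G hGU hGsupp hkey')
  · intro hchr
    have hs1 : 1 ≤ s := by omega
    refine ⟨(1/(2*(s:ℝ)))^s, 1, by positivity, one_pos, max (2*s) 1, fun n hn => ?_⟩
    have hn2s : 2*s ≤ n := le_trans (le_max_left _ _) hn
    have hn1 : 1 ≤ n := le_trans (le_max_right _ _) hn
    constructor
    · -- lower bound
      have hsm : s * (n / s) ≤ n := by
        rw [mul_comm]; exact Nat.div_mul_le_self n s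
      have hcopies := turanHG_copies (r := r) (n := n) (s := s) (by omega) hrs hsm hs1
      have hfree := turanHG_free (r := r) (n := n) hs1 hchr
      have hle := le_exCount r s n (by omega) hrs (expansion r F)
        (turanHG_uniform) (turanHG_hsupp) hfree
      have hchain : (n / s) ^ s ≤ exCount r n (completeHG r s) (expansion r F) :=
        hcopies.trans hle
      -- n ≤ 2 * s * (n / s)
      have hfloor : n ≤ 2 * s * (n / s) := by
        have hdm := Nat.div_add_mod n s
        have hmod : n % s < s := Nat.mod_lt _ (by omega)
        have hm2 : 2 ≤ n / s := (Nat.le_div_iff_mul_le (by omega)).2 hn2s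
        have h1 : s * 2 ≤ s * (n / s) := Nat.mul_le_mul_left s hm2
        nlinarith
      have hfloorR : (n:ℝ) / (2*(s:ℝ)) ≤ ((n / s : ℕ) : ℝ) := by
        rw [div_le_iff₀ (by positivity)]
        have : (n:ℝ) ≤ 2 * (s:ℝ) * ((n / s : ℕ) : ℝ) := by exact_mod_cast hfloor
        linarith
      calc (1/(2*(s:ℝ)))^s * (n:ℝ)^s = ((n:ℝ) / (2*(s:ℝ)))^s := by
            rw [← mul_pow]; ring_nf
        _ ≤ (((n / s : ℕ) : ℝ))^s := by
            apply pow_le_pow_left₀ (by positivity) hfloorR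
        _ = (((n / s) ^ s : ℕ) : ℝ) := by push_cast; ring
        _ ≤ (exCount r n (completeHG r s) (expansion r F) : ℝ) := by exact_mod_cast hchain
    · rw [one_mul]
      have h1 := exCount_le_pow r s n (by omega) hrs (expansion r F)
      calc (exCount r n (completeHG r s) (expansion r F) : ℝ) ≤ ((n ^ s : ℕ) : ℝ) := by
            exact_mod_cast h1
        _ = (n:ℝ)^s := by push_cast; ring
end

section
/- Fix integers s ≥ r ≥ 3 and ℓ ≥ 2. Then there exist a constant c = c(s,r,ℓ) and an integer N such that ex_r(n, K_s^{(r)}, S_ℓ^r) ≤ c·n^{r−2} for all n ≥ N. Moreover, if s ≤ ℓ + r − 2, then there also exists a constant c' > 0 such that ex_r(n, K_s^{(r)}, S_ℓ^r) ≥ c'·n^{r−2} for all n ≥ N. -/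
open Finset

namespace Stmt5Aux
open Finset

lemma mem_hsupp {G : HG} {x : ℕ} : x ∈ hsupp G ↔ ∃ e ∈ G, x ∈ e := by
  simp [hsupp, Finset.mem_sup, id]

lemma edge_subset_hsupp {G : HG} {e : Finset ℕ} (he : e ∈ G) : e ⊆ hsupp G :=
  fun x hx => mem_hsupp.2 ⟨e, he, hx⟩

lemma image_powersetCard {f : ℕ → ℕ} {A : Finset ℕ} (hf : Set.InjOn f ↑A) (k : ℕ) :
    (Finset.powersetCard k A).image (Finset.image f) = Finset.powersetCard k (A.image f) := by
  apply Finset.Subset.antisymm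
  · intro e he
    simp only [Finset.mem_image] at he
    obtain ⟨e', he', rfl⟩ := he
    rw [Finset.mem_powersetCard] at he' ⊢
    refine ⟨Finset.image_subset_image he'.1, ?_⟩
    rw [Finset.card_image_of_injOn (hf.mono (by exact_mod_cast he'.1)), he'.2]
  · intro e he
    rw [Finset.mem_powersetCard] at he
    obtain ⟨hsub, hcard⟩ := he
    have hfs : (A.filter (fun x => f x ∈ e)) ⊆ A := Finset.filter_subset _ _
    have himg : (A.filter (fun x => f x ∈ e)).image f = e := by
      apply Finset.Subset.antisymm
      · intro y hy
        simp only [Finset.mem_image, Finset.mem_filter] at hy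
        obtain ⟨x, ⟨_, hx⟩, rfl⟩ := hy
        exact hx
      · intro y hy
        obtain ⟨x, hxA, rfl⟩ := Finset.mem_image.1 (hsub hy)
        exact Finset.mem_image.2 ⟨x, Finset.mem_filter.2 ⟨hxA, hy⟩, rfl⟩
    refine Finset.mem_image.2 ⟨A.filter (fun x => f x ∈ e), ?_, himg⟩
    rw [Finset.mem_powersetCard]
    refine ⟨hfs, ?_⟩
    have hc2 := Finset.card_image_of_injOn (hf.mono (by exact_mod_cast hfs))
    rw [himg] at hc2
    omega

lemma hsupp_powersetCard {A : Finset ℕ} {k : ℕ} (hk1 : 1 ≤ k) (hk2 : k ≤ A.card) :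
    hsupp (Finset.powersetCard k A) = A := by
  apply Finset.Subset.antisymm
  · intro x hx
    obtain ⟨e, he, hxe⟩ := mem_hsupp.1 hx
    exact (Finset.mem_powersetCard.1 he).1 hxe
  · intro x hx
    have h1 : k - 1 ≤ (A.erase x).card := by
      rw [Finset.card_erase_of_mem hx]; omega
    obtain ⟨U, hU, hUcard⟩ := (A.erase x).exists_subset_card_eq h1
    have hxU : x ∉ U := fun hc => (Finset.mem_erase.1 (hU hc)).1 rfl
    refine mem_hsupp.2 ⟨insert x U, ?_, Finset.mem_insert_self _ _⟩
    rw [Finset.mem_powersetCard]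
    constructor
    · intro y hy
      rcases Finset.mem_insert.1 hy with rfl | hyU
      · exact hx
      · exact (Finset.mem_erase.1 (hU hyU)).2
    · rw [Finset.card_insert_of_notMem hxU, hUcard]; omega

/-- The sunflower (with core `{v}` and `l` petals) configuration. -/
def Sunflower (G : HG) (l : ℕ) : Prop :=
  ∃ v : ℕ, ∃ F : HG, F ⊆ G ∧ F.card = l ∧ (∀ e ∈ F, v ∈ e) ∧
    ∀ e ∈ F, ∀ e' ∈ F, e ≠ e' → e ∩ e' = {v}

/-- Encoding of the edge `{0, i+1}` of the star. -/
def enc (i : ℕ) : ℕ := Encodable.encode ({0, i+1} : Finset ℕ)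

/-- The `i`-th petal of the expansion of the star. -/
def Epet (r i : ℕ) : Finset ℕ :=
  ({0, i+1} : Finset ℕ).image (fun v => Nat.pair 0 v) ∪
    (Finset.range (r-2)).image (fun j => Nat.pair 1 (Nat.pair (enc i) j))

lemma expansion_starG (r l : ℕ) :
    expansion r (starG l) = (Finset.range l).image (fun i => Epet r i) := by
  unfold expansion starG
  rw [Finset.image_image]
  rfl

lemma mem_Epet {r i x : ℕ} :
    x ∈ Epet r i ↔ (x = Nat.pair 0 0 ∨ x = Nat.pair 0 (i+1)) ∨
      ∃ j < r-2, x = Nat.pair 1 (Nat.pair (enc i) j) := by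
  constructor
  · intro h
    rcases Finset.mem_union.1 h with h1 | h2
    · obtain ⟨v, hv, rfl⟩ := Finset.mem_image.1 h1
      rcases Finset.mem_insert.1 hv with rfl | hv
      · exact Or.inl (Or.inl rfl)
      · rw [Finset.mem_singleton.1 hv]
        exact Or.inl (Or.inr rfl)
    · obtain ⟨j, hj, rfl⟩ := Finset.mem_image.1 h2
      exact Or.inr ⟨j, Finset.mem_range.1 hj, rfl⟩
  · intro h
    rcases h with (rfl | rfl) | ⟨j, hj, rfl⟩
    · exact Finset.mem_union_left _ (Finset.mem_image.2 ⟨0, Finset.mem_insert_self _ _, rfl⟩)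
    · exact Finset.mem_union_left _
        (Finset.mem_image.2 ⟨i+1, Finset.mem_insert_of_mem (Finset.mem_singleton_self _), rfl⟩)
    · exact Finset.mem_union_right _ (Finset.mem_image.2 ⟨j, Finset.mem_range.2 hj, rfl⟩)

lemma enc_inj {i j : ℕ} (h : enc i = enc j) : i = j := by
  have h2 : ({0, i+1} : Finset ℕ) = {0, j+1} := Encodable.encode_injective h
  have h3 : (i+1 : ℕ) ∈ ({0, j+1} : Finset ℕ) := by
    rw [← h2]; exact Finset.mem_insert_of_mem (Finset.mem_singleton_self _)
  rcases Finset.mem_insert.1 h3 with h4 | h4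
  · omega
  · exact Nat.succ_injective (Finset.mem_singleton.1 h4)

lemma pair00_mem_Epet {r i : ℕ} : Nat.pair 0 0 ∈ Epet r i :=
  mem_Epet.2 (Or.inl (Or.inl rfl))

lemma Epet_inter_subset {r i j : ℕ} (hij : i ≠ j) {x : ℕ}
    (hxi : x ∈ Epet r i) (hxj : x ∈ Epet r j) : x = Nat.pair 0 0 := by
  rcases mem_Epet.1 hxi with (rfl | rfl) | ⟨a, _, rfl⟩
  · rfl
  · rcases mem_Epet.1 hxj with (h | h) | ⟨b, _, h⟩
    · exact h
    · have := (Nat.pair_eq_pair.1 h).2; omega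
    · have := (Nat.pair_eq_pair.1 h).1; omega
  · rcases mem_Epet.1 hxj with (h | h) | ⟨b, _, h⟩
    · have := (Nat.pair_eq_pair.1 h).1; omega
    · have := (Nat.pair_eq_pair.1 h).1; omega
    · have h1 := (Nat.pair_eq_pair.1 h).2
      have h2 := (Nat.pair_eq_pair.1 h1).1
      exact absurd (enc_inj h2) hij

lemma mem_hsupp_expansion {r l x : ℕ} :
    x ∈ hsupp (expansion r (starG l)) ↔ ∃ i < l, x ∈ Epet r i := by
  rw [expansion_starG]
  constructor
  · intro h
    obtain ⟨e, he, hxe⟩ := mem_hsupp.1 h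
    obtain ⟨i, hi, rfl⟩ := Finset.mem_image.1 he
    exact ⟨i, Finset.mem_range.1 hi, hxe⟩
  · rintro ⟨i, hi, hx⟩
    exact mem_hsupp.2 ⟨Epet r i, Finset.mem_image.2 ⟨i, Finset.mem_range.2 hi, rfl⟩, hx⟩



lemma contains_of_sunflower {G : HG} {r l : ℕ} (hr : 3 ≤ r) (hG : Uniform r G)
    (h : Sunflower G l) : Contains G (expansion r (starG l)) := by
  classical
  obtain ⟨v, F, hFG, hFcard, hFv, hFint⟩ := h
  set L : List (Finset ℕ) := F.toList with hL
  have hLlen : L.length = l := by rw [hL, Finset.length_toList, hFcard]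
  have hLnd : L.Nodup := by rw [hL]; exact Finset.nodup_toList F
  set e : ℕ → Finset ℕ := fun i => L.getD i ∅ with he
  have he_mem : ∀ i, i < l → e i ∈ F := by
    intro i hi
    have hi' : i < L.length := by omega
    simp only [he]
    rw [List.getD_eq_getElem L ∅ hi', ← Finset.mem_toList, ← hL]
    exact List.getElem_mem hi'
  have he_inj : ∀ i, i < l → ∀ j, j < l → e i = e j → i = j := by
    intro i hi j hj hij
    have hi' : i < L.length := by omega
    have hj' : j < L.length := by omega
    simp only [he] at hij
    rw [List.getD_eq_getElem L ∅ hi', List.getD_eq_getElem L ∅ hj'] at hij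
    exact (List.Nodup.getElem_inj_iff hLnd).1 hij
  have he_surj : ∀ g ∈ F, ∃ i, i < l ∧ e i = g := by
    intro g hg
    rw [← Finset.mem_toList, ← hL] at hg
    obtain ⟨i, hi, hig⟩ := List.mem_iff_getElem.1 hg
    refine ⟨i, by omega, ?_⟩
    simp only [he]
    rw [List.getD_eq_getElem L ∅ hi]
    exact hig
  set w : ℕ → List ℕ := fun i => ((e i).erase v).toList with hw
  have hwlen : ∀ i, i < l → (w i).length = r - 1 := by
    intro i hi
    simp only [hw, Finset.length_toList]
    rw [Finset.card_erase_of_mem (hFv _ (he_mem i hi)), hG _ (hFG (he_mem i hi))]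
  have hwnd : ∀ i, (w i).Nodup := by
    intro i; simp only [hw]; exact Finset.nodup_toList _
  set nth : ℕ → ℕ → ℕ := fun i k => (w i).getD k 0 with hnth
  have hnth_mem : ∀ i, i < l → ∀ k, k < r - 1 → nth i k ∈ (e i).erase v := by
    intro i hi k hk
    have hk' : k < (w i).length := by rw [hwlen i hi]; omega
    simp only [hnth]
    rw [List.getD_eq_getElem _ 0 hk', ← Finset.mem_toList]
    exact List.getElem_mem hk'
  have hnth_ne_v : ∀ i, i < l → ∀ k, k < r - 1 → nth i k ≠ v := by
    intro i hi k hk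
    exact (Finset.mem_erase.1 (hnth_mem i hi k hk)).1
  have hnth_injk : ∀ i, i < l → ∀ k, k < r-1 → ∀ k', k' < r-1 → nth i k = nth i k' → k = k' := by
    intro i hi k hk k' hk' hkk
    have h1 : k < (w i).length := by rw [hwlen i hi]; omega
    have h2 : k' < (w i).length := by rw [hwlen i hi]; omega
    simp only [hnth] at hkk
    rw [List.getD_eq_getElem _ 0 h1, List.getD_eq_getElem _ 0 h2] at hkk
    exact (List.Nodup.getElem_inj_iff (hwnd i)).1 hkk
  have hnth_surj : ∀ i, i < l → ∀ x ∈ (e i).erase v, ∃ k, k < r-1 ∧ nth i k = x := by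
    intro i hi x hx
    have hx' : x ∈ w i := by simp only [hw]; exact Finset.mem_toList.2 hx
    obtain ⟨k, hk, hkx⟩ := List.mem_iff_getElem.1 hx'
    refine ⟨k, by rw [hwlen i hi] at hk; omega, ?_⟩
    simp only [hnth]
    rw [List.getD_eq_getElem _ 0 hk]
    exact hkx
  have hnth_cross : ∀ i, i < l → ∀ j, j < l → i ≠ j → ∀ k, k < r-1 → ∀ k', k' < r-1 →
      nth i k ≠ nth j k' := by
    intro i hi j hj hij k hk k' hk' heq
    have hne : e i ≠ e j := fun hc => hij (he_inj i hi j hj hc)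
    have h1 : nth i k ∈ e i ∩ e j := Finset.mem_inter.2
      ⟨Finset.mem_of_mem_erase (hnth_mem i hi k hk),
        by rw [heq]; exact Finset.mem_of_mem_erase (hnth_mem j hj k' hk')⟩
    rw [hFint _ (he_mem i hi) _ (he_mem j hj) hne] at h1
    exact hnth_ne_v i hi k hk (Finset.mem_singleton.1 h1)
  set inv : ℕ → ℕ := fun c => if h : ∃ i, i < l ∧ enc i = c then Nat.find h else 0 with hinv
  have hinv_enc : ∀ i, i < l → inv (enc i) = i := by
    intro i hi
    have hex : ∃ j, j < l ∧ enc j = enc i := ⟨i, hi, rfl⟩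
    simp only [hinv]
    rw [dif_pos hex]
    exact enc_inj (Nat.find_spec hex).2
  set f : ℕ → ℕ := fun x =>
    if x.unpair.1 = 0 then (if x.unpair.2 = 0 then v else nth (x.unpair.2 - 1) 0)
    else nth (inv x.unpair.2.unpair.1) (x.unpair.2.unpair.2 + 1) with hf
  have hf0 : f (Nat.pair 0 0) = v := by simp only [hf, Nat.unpair_pair]; simp
  have hfleaf : ∀ i : ℕ, f (Nat.pair 0 (i+1)) = nth i 0 := by
    intro i; simp only [hf, Nat.unpair_pair]; simp
  have hfpriv : ∀ i, i < l → ∀ j : ℕ, f (Nat.pair 1 (Nat.pair (enc i) j)) = nth i (j+1) := by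
    intro i hi j; simp only [hf, Nat.unpair_pair]
    simp [hinv_enc i hi]
  have himg : ∀ i, i < l → (Epet r i).image f = e i := by
    intro i hi
    apply Finset.Subset.antisymm
    · intro y hy
      obtain ⟨x, hx, rfl⟩ := Finset.mem_image.1 hy
      rcases mem_Epet.1 hx with (rfl | rfl) | ⟨j, hj, rfl⟩
      · rw [hf0]; exact hFv _ (he_mem i hi)
      · rw [hfleaf]
        exact Finset.mem_of_mem_erase (hnth_mem i hi 0 (by omega))
      · rw [hfpriv i hi]
        exact Finset.mem_of_mem_erase (hnth_mem i hi (j+1) (by omega))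
    · intro x hxe
      by_cases hxv : x = v
      · subst hxv
        exact Finset.mem_image.2 ⟨Nat.pair 0 0, pair00_mem_Epet, hf0⟩
      · obtain ⟨k, hk, hkx⟩ := hnth_surj i hi x (Finset.mem_erase.2 ⟨hxv, hxe⟩)
        rcases k with _ | k'
        · exact Finset.mem_image.2 ⟨Nat.pair 0 (i+1), mem_Epet.2 (Or.inl (Or.inr rfl)),
            by rw [hfleaf]; exact hkx⟩
        · exact Finset.mem_image.2 ⟨Nat.pair 1 (Nat.pair (enc i) k'),
            mem_Epet.2 (Or.inr ⟨k', by omega, rfl⟩), by rw [hfpriv i hi]; exact hkx⟩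
  have hinjOn : Set.InjOn f ↑(hsupp (expansion r (starG l))) := by
    intro x hx y hy hxy
    rw [Finset.mem_coe] at hx hy
    obtain ⟨i, hi, hxi⟩ := mem_hsupp_expansion.1 hx
    obtain ⟨j, hj, hyj⟩ := mem_hsupp_expansion.1 hy
    rcases mem_Epet.1 hxi with (rfl | rfl) | ⟨a, ha, rfl⟩ <;>
      rcases mem_Epet.1 hyj with (rfl | rfl) | ⟨b, hb, rfl⟩
    · rfl
    · rw [hf0, hfleaf] at hxy
      exact absurd hxy.symm (hnth_ne_v j hj 0 (by omega))
    · rw [hf0, hfpriv j hj] at hxy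
      exact absurd hxy.symm (hnth_ne_v j hj (b+1) (by omega))
    · rw [hf0, hfleaf] at hxy
      exact absurd hxy (hnth_ne_v i hi 0 (by omega))
    · rw [hfleaf, hfleaf] at hxy
      by_cases hij : i = j
      · rw [hij]
      · exact absurd hxy (hnth_cross i hi j hj hij 0 (by omega) 0 (by omega))
    · rw [hfleaf, hfpriv j hj] at hxy
      by_cases hij : i = j
      · subst hij
        exact absurd (hnth_injk i hi 0 (by omega) (b+1) (by omega) hxy) (by omega)
      · exact absurd hxy (hnth_cross i hi j hj hij 0 (by omega) (b+1) (by omega))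
    · rw [hfpriv i hi, hf0] at hxy
      exact absurd hxy (hnth_ne_v i hi (a+1) (by omega))
    · rw [hfpriv i hi, hfleaf] at hxy
      by_cases hij : i = j
      · subst hij
        exact absurd (hnth_injk i hi (a+1) (by omega) 0 (by omega) hxy) (by omega)
      · exact absurd hxy (hnth_cross i hi j hj hij (a+1) (by omega) 0 (by omega))
    · rw [hfpriv i hi, hfpriv j hj] at hxy
      by_cases hij : i = j
      · subst hij
        have hab : a = b := by
          have := hnth_injk i hi (a+1) (by omega) (b+1) (by omega) hxy
          omega
        rw [hab]
      · exact absurd hxy (hnth_cross i hi j hj hij (a+1) (by omega) (b+1) (by omega))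
  refine ⟨F, hFG, f, hinjOn, ?_⟩
  rw [expansion_starG]
  unfold emap
  rw [Finset.image_image]
  apply Finset.Subset.antisymm
  · intro g hg
    obtain ⟨i, hi, rfl⟩ := Finset.mem_image.1 hg
    rw [Finset.mem_range] at hi
    simp only [Function.comp_apply]
    rw [himg i hi]
    exact he_mem i hi
  · intro g hg
    obtain ⟨i, hi, hig⟩ := he_surj g hg
    refine Finset.mem_image.2 ⟨i, Finset.mem_range.2 hi, ?_⟩
    simp only [Function.comp_apply]
    rw [himg i hi]
    exact hig

lemma sunflower_of_contains {G : HG} {r l : ℕ} (hl : 1 ≤ l)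
    (h : Contains G (expansion r (starG l))) : Sunflower G l := by
  obtain ⟨K, hKG, f, hinj, hemap⟩ := h
  have hsuppmem : ∀ i, i < l → ∀ x ∈ Epet r i,
      (x : ℕ) ∈ (↑(hsupp (expansion r (starG l))) : Set ℕ) :=
    fun i hi x hx => Finset.mem_coe.2 (mem_hsupp_expansion.2 ⟨i, hi, hx⟩)
  have hKeq : K = (Finset.range l).image (fun i => (Epet r i).image f) := by
    rw [← hemap, expansion_starG]
    unfold emap
    rw [Finset.image_image]
    rfl
  refine ⟨f (Nat.pair 0 0), K, hKG, ?_, ?_, ?_⟩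
  · rw [hKeq, Finset.card_image_of_injOn, Finset.card_range]
    intro i hi j hj hij
    rw [Finset.mem_coe, Finset.mem_range] at hi hj
    have hij' : (Epet r i).image f = (Epet r j).image f := hij
    have h1 : f (Nat.pair 0 (i+1)) ∈ (Epet r j).image f := by
      rw [← hij']
      exact Finset.mem_image_of_mem f (mem_Epet.2 (Or.inl (Or.inr rfl)))
    obtain ⟨y, hy, hyx⟩ := Finset.mem_image.1 h1
    have h2 : y = Nat.pair 0 (i+1) :=
      hinj (hsuppmem j hj y hy) (hsuppmem i hi _ (mem_Epet.2 (Or.inl (Or.inr rfl)))) hyx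
    rcases mem_Epet.1 hy with (h3 | h3) | ⟨b, _, h3⟩ <;> rw [h2] at h3
    · have := Nat.pair_eq_pair.1 h3
      omega
    · have := Nat.pair_eq_pair.1 h3
      omega
    · have := Nat.pair_eq_pair.1 h3
      omega
  · intro g hg
    rw [hKeq] at hg
    obtain ⟨i, _, rfl⟩ := Finset.mem_image.1 hg
    exact Finset.mem_image_of_mem f pair00_mem_Epet
  · intro g hg g' hg' hne
    rw [hKeq] at hg hg'
    obtain ⟨i, hi, rfl⟩ := Finset.mem_image.1 hg
    obtain ⟨j, hj, rfl⟩ := Finset.mem_image.1 hg'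
    rw [Finset.mem_range] at hi hj
    have hij : i ≠ j := fun hc => hne (by rw [hc])
    apply Finset.Subset.antisymm
    · intro z hz
      obtain ⟨hz1, hz2⟩ := Finset.mem_inter.1 hz
      obtain ⟨x, hx, rfl⟩ := Finset.mem_image.1 hz1
      obtain ⟨y, hy, hyz⟩ := Finset.mem_image.1 hz2
      have hxy : y = x := hinj (hsuppmem j hj y hy) (hsuppmem i hi x hx) hyz
      rw [hxy] at hy
      rw [Finset.mem_singleton, Epet_inter_subset hij hx hy]
    · intro z hz
      rw [Finset.mem_singleton.1 hz]
      exact Finset.mem_inter.2 ⟨Finset.mem_image_of_mem f pair00_mem_Epet,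
        Finset.mem_image_of_mem f pair00_mem_Epet⟩

lemma hsupp_mono {G K : HG} (h : K ⊆ G) : hsupp K ⊆ hsupp G := fun x hx =>
  let ⟨e, he, hxe⟩ := mem_hsupp.1 hx
  mem_hsupp.2 ⟨e, h he, hxe⟩

lemma cover_exists {G : HG} {r l : ℕ} (hr : 2 ≤ r) (hG : Uniform r G)
    (hfree : ¬ Sunflower G l) (v : ℕ) :
    ∃ T : Finset ℕ, T.card ≤ l * r ∧ v ∉ T ∧ ∀ e ∈ G, v ∈ e → (e ∩ T).Nonempty := by
  classical
  set C : Finset HG := G.powerset.filter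
    (fun F => (∀ e ∈ F, v ∈ e) ∧ ∀ e ∈ F, ∀ e' ∈ F, e ≠ e' → e ∩ e' = {v}) with hC
  have hne : C.Nonempty := ⟨∅, by simp [hC]⟩
  obtain ⟨F, hFC, hFmax⟩ := C.exists_max_image (fun F => F.card) hne
  rw [hC, Finset.mem_filter, Finset.mem_powerset] at hFC
  obtain ⟨hFG, hFv, hFint⟩ := hFC
  have hFcard : F.card ≤ l - 1 := by
    by_contra hbig
    obtain ⟨F', hF'F, hF'card⟩ := F.exists_subset_card_eq (show l ≤ F.card by omega)
    exact hfree ⟨v, F', (hF'F.trans hFG), hF'card, fun e he => hFv e (hF'F he),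
      fun e he e' he' hne' => hFint e (hF'F he) e' (hF'F he') hne'⟩
  refine ⟨(F.sup id) \ {v}, ?_, by simp, ?_⟩
  · calc ((F.sup id) \ {v}).card ≤ (F.sup id).card :=
          Finset.card_le_card (Finset.sdiff_subset)
      _ ≤ ∑ e ∈ F, (id e).card := by
          rw [Finset.sup_eq_biUnion]; exact Finset.card_biUnion_le
      _ = ∑ e ∈ F, r := Finset.sum_congr rfl (fun e he => hG e (hFG he))
      _ = F.card * r := by rw [Finset.sum_const, smul_eq_mul]
      _ ≤ l * r := by
          have h9 : F.card ≤ l := by omega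
          exact Nat.mul_le_mul_right r h9
  · intro e heG hve
    by_contra hempty
    rw [Finset.not_nonempty_iff_eq_empty] at hempty
    have hsub : ∀ x ∈ e, x ∈ F.sup id → x = v := by
      intro x hx hxs
      by_contra hxv
      have hmem : x ∈ e ∩ ((F.sup id) \ {v}) :=
        Finset.mem_inter.2 ⟨hx, Finset.mem_sdiff.2 ⟨hxs, by simp [hxv]⟩⟩
      rw [hempty] at hmem
      exact absurd hmem (Finset.notMem_empty x)
    have heF : e ∉ F := by
      intro heF
      have hecard : e.card = r := hG e heG
      have hex : ∃ x ∈ e, x ≠ v := by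
        by_contra hall
        push_neg at hall
        have hsub2 : e ⊆ {v} := fun x hx => Finset.mem_singleton.2 (hall x hx)
        have := Finset.card_le_card hsub2
        rw [hecard, Finset.card_singleton] at this
        omega
      obtain ⟨x, hxe, hxv⟩ := hex
      have hxs : (id e : Finset ℕ) ⊆ F.sup id := Finset.le_sup heF
      exact hxv (hsub x hxe (hxs hxe))
    have hins : insert e F ∈ C := by
      rw [hC, Finset.mem_filter, Finset.mem_powerset]
      refine ⟨Finset.insert_subset heG hFG, ?_, ?_⟩
      · intro g hg
        rcases Finset.mem_insert.1 hg with rfl | hg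
        · exact hve
        · exact hFv g hg
      · intro g hg g' hg' hgg'
        have key : ∀ g'' ∈ F, e ∩ g'' = {v} := by
          intro g'' hg''
          apply Finset.Subset.antisymm
          · intro x hx
            obtain ⟨hx1, hx2⟩ := Finset.mem_inter.1 hx
            have hxs : (id g'' : Finset ℕ) ⊆ F.sup id := Finset.le_sup hg''
            exact Finset.mem_singleton.2 (hsub x hx1 (hxs hx2))
          · intro x hx
            rw [Finset.mem_singleton.1 hx]
            exact Finset.mem_inter.2 ⟨hve, hFv g'' hg''⟩
        rcases Finset.mem_insert.1 hg with rfl | hgF <;>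
          rcases Finset.mem_insert.1 hg' with rfl | hg'F
        · exact absurd rfl hgg'
        · exact key g' hg'F
        · rw [Finset.inter_comm]; exact key g hgF
        · exact hFint g hgF g' hg'F hgg'
    have hcardle := hFmax _ hins
    rw [Finset.card_insert_of_notMem heF] at hcardle
    omega

/-- The finset of `s`-cliques. -/
def cliqF (r s n : ℕ) (G : HG) : Finset (Finset ℕ) :=
  (Finset.powersetCard s (Finset.range n)).filter
    (fun S => ∀ e ∈ Finset.powersetCard r S, e ∈ G)

lemma mem_cliqF_iff {r s n : ℕ} {G : HG} {S : Finset ℕ} :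
    S ∈ cliqF r s n G ↔ S ⊆ Finset.range n ∧ S.card = s ∧
      ∀ e ∈ Finset.powersetCard r S, e ∈ G := by
  unfold cliqF
  rw [Finset.mem_filter, Finset.mem_powersetCard]
  tauto

lemma hsupp_completeHG {r s : ℕ} (hr : 1 ≤ r) (hrs : r ≤ s) :
    hsupp (completeHG r s) = Finset.range s := by
  unfold completeHG
  exact hsupp_powersetCard hr (by rw [Finset.card_range]; exact hrs)

lemma copy_eq_powersetCard {r s : ℕ} {K : HG} (hr : 1 ≤ r) (hrs : r ≤ s)
    (h : IsCopy (completeHG r s) K) :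
    K = Finset.powersetCard r (hsupp K) ∧ (hsupp K).card = s := by
  obtain ⟨f, hinj, hem⟩ := h
  rw [hsupp_completeHG hr hrs] at hinj
  have hK : K = Finset.powersetCard r ((Finset.range s).image f) := by
    rw [← hem]
    unfold completeHG emap
    exact image_powersetCard hinj r
  have hcard : ((Finset.range s).image f).card = s := by
    rw [Finset.card_image_of_injOn hinj, Finset.card_range]
  have hsuppK : hsupp K = (Finset.range s).image f := by
    rw [hK]
    exact hsupp_powersetCard hr (by omega)
  rw [hsuppK, hK]
  exact ⟨rfl, hcard⟩

lemma copyCount_le_cliqF {r s n : ℕ} {G : HG} (hr : 1 ≤ r) (hrs : r ≤ s)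
    (hGn : hsupp G ⊆ Finset.range n) :
    copyCount (completeHG r s) G ≤ (cliqF r s n G).card := by
  classical
  unfold copyCount
  have key : ∀ K : HG, K ⊆ G → IsCopy (completeHG r s) K →
      K = Finset.powersetCard r (hsupp K) ∧ hsupp K ∈ cliqF r s n G := by
    intro K hKG hcopy
    obtain ⟨hKeq, hKcard⟩ := copy_eq_powersetCard hr hrs hcopy
    refine ⟨hKeq, mem_cliqF_iff.2 ⟨(hsupp_mono hKG).trans hGn, hKcard, ?_⟩⟩
    intro e he
    rw [← hKeq] at he
    exact hKG he
  have hinj2 : Set.InjOn hsupp {K : HG | K ⊆ G ∧ IsCopy (completeHG r s) K} := by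
    intro K1 h1 K2 h2 h12
    rw [(key K1 h1.1 h1.2).1, (key K2 h2.1 h2.2).1, h12]
  calc {K : HG | K ⊆ G ∧ IsCopy (completeHG r s) K}.ncard
      = (hsupp '' {K : HG | K ⊆ G ∧ IsCopy (completeHG r s) K}).ncard :=
        (Set.ncard_image_of_injOn hinj2).symm
    _ ≤ (↑(cliqF r s n G) : Set (Finset ℕ)).ncard := by
        apply Set.ncard_le_ncard
        · rintro S ⟨K, hK, rfl⟩
          exact Finset.mem_coe.2 (key K hK.1 hK.2).2
        · exact Finset.finite_toSet _
    _ = (cliqF r s n G).card := Set.ncard_coe_finset _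

lemma cliqF_le_copyCount {r s n : ℕ} {G : HG} (hr : 1 ≤ r) (hrs : r ≤ s) :
    (cliqF r s n G).card ≤ copyCount (completeHG r s) G := by
  classical
  unfold copyCount
  have hmap : ∀ S ∈ cliqF r s n G, Finset.powersetCard r S ⊆ G ∧
      IsCopy (completeHG r s) (Finset.powersetCard r S) := by
    intro S hS
    obtain ⟨hSn, hScard, hSq⟩ := mem_cliqF_iff.1 hS
    refine ⟨fun e he => hSq e he, ?_⟩
    set f : ℕ → ℕ := fun i => (S.sort (· ≤ ·)).getD i 0 with hf
    have hlen : (S.sort (· ≤ ·)).length = s := by rw [Finset.length_sort, hScard]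
    have himg : (Finset.range s).image f = S := by
      apply Finset.Subset.antisymm
      · intro y hy
        obtain ⟨i, hi, rfl⟩ := Finset.mem_image.1 hy
        rw [Finset.mem_range] at hi
        have hi' : i < (S.sort (· ≤ ·)).length := by omega
        simp only [hf]
        rw [List.getD_eq_getElem _ 0 hi']
        exact (Finset.mem_sort _).1 (List.getElem_mem hi')
      · intro x hx
        obtain ⟨i, hi, hix⟩ := List.mem_iff_getElem.1 ((Finset.mem_sort (· ≤ ·)).2 hx)
        refine Finset.mem_image.2 ⟨i, Finset.mem_range.2 (by omega), ?_⟩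
        simp only [hf]
        rw [List.getD_eq_getElem _ 0 hi]
        exact hix
    have hinj : Set.InjOn f ↑(Finset.range s) := by
      intro i hi j hj hij
      rw [Finset.mem_coe, Finset.mem_range] at hi hj
      have hi' : i < (S.sort (· ≤ ·)).length := by omega
      have hj' : j < (S.sort (· ≤ ·)).length := by omega
      simp only [hf] at hij
      rw [List.getD_eq_getElem _ 0 hi', List.getD_eq_getElem _ 0 hj'] at hij
      exact (List.Nodup.getElem_inj_iff (Finset.sort_nodup _ _)).1 hij
    refine ⟨f, ?_, ?_⟩
    · rw [hsupp_completeHG hr hrs]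
      exact hinj
    · unfold completeHG emap
      rw [image_powersetCard hinj, himg]
  have hinj2 : Set.InjOn (fun S => Finset.powersetCard r S)
      (↑(cliqF r s n G) : Set (Finset ℕ)) := by
    intro S hS S' hS' hSS
    rw [Finset.mem_coe] at hS hS'
    have h1 := (mem_cliqF_iff.1 hS).2.1
    have h2 := (mem_cliqF_iff.1 hS').2.1
    have hSS' : Finset.powersetCard r S = Finset.powersetCard r S' := hSS
    have e1 : hsupp (Finset.powersetCard r S) = S := hsupp_powersetCard hr (by omega)
    have e2 : hsupp (Finset.powersetCard r S') = S' := hsupp_powersetCard hr (by omega)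
    rw [← e1, ← e2, hSS']
  have hfin : {K : HG | K ⊆ G ∧ IsCopy (completeHG r s) K}.Finite :=
    Set.Finite.subset (Finset.finite_toSet G.powerset)
      (fun K hK => Finset.mem_coe.2 (Finset.mem_powerset.2 hK.1))
  calc (cliqF r s n G).card
      = ((fun S => Finset.powersetCard r S) '' (↑(cliqF r s n G) : Set (Finset ℕ))).ncard := by
        rw [Set.ncard_image_of_injOn hinj2, Set.ncard_coe_finset]
    _ ≤ {K : HG | K ⊆ G ∧ IsCopy (completeHG r s) K}.ncard := by
        apply Set.ncard_le_ncard
        · rintro K ⟨S, hS, rfl⟩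
          exact hmap S (Finset.mem_coe.1 hS)
        · exact hfin

lemma index_of_mem {Y : Finset ℕ} {u : ℕ} (hu : u ∈ Y) :
    ∃ i < Y.card, (Y.sort (· ≤ ·)).getD i 0 = u := by
  obtain ⟨i, hi, hix⟩ := List.mem_iff_getElem.1 ((Finset.mem_sort (· ≤ ·)).2 hu)
  have hi' : i < Y.card := by rw [← Finset.length_sort (· ≤ ·)]; exact hi
  refine ⟨i, hi', ?_⟩
  rw [List.getD_eq_getElem _ 0 hi]
  exact hix

lemma subset_index {X A : Finset ℕ} (hA : A ⊆ X) :
    ∃ P ⊆ Finset.range X.card,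
      P.image (fun p => (X.sort (· ≤ ·)).getD p 0) = A := by
  classical
  refine ⟨(Finset.range X.card).filter (fun p => (X.sort (· ≤ ·)).getD p 0 ∈ A),
    Finset.filter_subset _ _, ?_⟩
  apply Finset.Subset.antisymm
  · intro a ha
    obtain ⟨p, hp, rfl⟩ := Finset.mem_image.1 ha
    exact (Finset.mem_filter.1 hp).2
  · intro a ha
    obtain ⟨i, hi, hia⟩ := index_of_mem (hA ha)
    refine Finset.mem_image.2 ⟨i, Finset.mem_filter.2 ⟨Finset.mem_range.2 hi, ?_⟩, hia⟩
    rw [hia]; exact ha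

/-- Decoding a clique certificate. -/
def decode (T : ℕ → Finset ℕ) (v : ℕ) (B P : Finset ℕ) (i m : ℕ) : Finset ℕ :=
  let part : Finset ℕ := insert v ((P.image (fun p => ((T v).sort (· ≤ ·)).getD p 0)) ∪ B)
  insert (((T ((part.sort (· ≤ ·)).getD i 0)).sort (· ≤ ·)).getD m 0) part

lemma clique_cert {G : HG} {r s l n : ℕ} {T : ℕ → Finset ℕ} (hr : 3 ≤ r) (hrs : r ≤ s)
    (hT : ∀ v, (T v).card ≤ l*r ∧ v ∉ T v ∧ ∀ e ∈ G, v ∈ e → (e ∩ T v).Nonempty)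
    {S : Finset ℕ} (hS : S ∈ cliqF r s n G) :
    ∃ v B P i m, (v ∈ Finset.range n ∧ B ⊆ Finset.range n ∧ B.card ≤ r-3 ∧
      P ⊆ Finset.range (l*r) ∧ i < s + l*r + 1 ∧ m < l*r) ∧ decode T v B P i m = S := by
  classical
  obtain ⟨hSn, hScard, hSq⟩ := mem_cliqF_iff.1 hS
  have hSne : S.Nonempty := Finset.card_pos.1 (by omega)
  -- (F1)
  have hF1 : ∀ v ∈ S, (S \ insert v (T v)).card ≤ r - 2 := by
    intro v hv
    by_contra hbig
    obtain ⟨U, hU, hUcard⟩ :=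
      (S \ insert v (T v)).exists_subset_card_eq (show r - 1 ≤ _ by omega)
    have hvU : v ∉ U := fun hc => (Finset.mem_sdiff.1 (hU hc)).2 (Finset.mem_insert_self _ _)
    have heS : insert v U ⊆ S := by
      intro x hx
      rcases Finset.mem_insert.1 hx with rfl | hx
      · exact hv
      · exact (Finset.mem_sdiff.1 (hU hx)).1
    have heG : insert v U ∈ G := by
      apply hSq
      rw [Finset.mem_powersetCard]
      refine ⟨heS, ?_⟩
      rw [Finset.card_insert_of_notMem hvU, hUcard]
      omega
    obtain ⟨x, hx⟩ := (hT v).2.2 _ heG (Finset.mem_insert_self _ _)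
    obtain ⟨hx1, hx2⟩ := Finset.mem_inter.1 hx
    rcases Finset.mem_insert.1 hx1 with rfl | hx1
    · exact (hT x).2.1 hx2
    · exact (Finset.mem_sdiff.1 (hU hx1)).2 (Finset.mem_insert_of_mem hx2)
  -- (F2)
  have hF2 : ∀ v ∈ S, S = insert v ((S ∩ T v) ∪ (S \ insert v (T v))) := by
    intro v hv
    apply Finset.Subset.antisymm
    · intro x hx
      by_cases hxv : x = v
      · rw [hxv]; exact Finset.mem_insert_self _ _
      · by_cases hxT : x ∈ T v
        · exact Finset.mem_insert_of_mem (Finset.mem_union_left _ (Finset.mem_inter.2 ⟨hx, hxT⟩))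
        · refine Finset.mem_insert_of_mem (Finset.mem_union_right _ (Finset.mem_sdiff.2 ⟨hx, ?_⟩))
          intro hc
          rcases Finset.mem_insert.1 hc with hc | hc
          · exact hxv hc
          · exact hxT hc
    · intro x hx
      rcases Finset.mem_insert.1 hx with rfl | hx
      · exact hv
      · rcases Finset.mem_union.1 hx with hx | hx
        · exact (Finset.mem_inter.1 hx).1
        · exact (Finset.mem_sdiff.1 hx).1
  -- (F3)
  have hF3 : ∀ v ∈ S, (S ∩ T v).Nonempty := by
    intro v hv
    rw [Finset.nonempty_iff_ne_empty]
    intro hc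
    have h1 := hF2 v hv
    rw [hc, Finset.empty_union] at h1
    have h2 : S.card ≤ (S \ insert v (T v)).card + 1 := by
      conv_lhs => rw [h1]
      exact Finset.card_insert_le _ _
    have := hF1 v hv
    omega
  -- main case analysis
  by_cases hcase1 : ∃ v ∈ S, (S \ insert v (T v)).card ≤ r - 3
  · -- Case A
    obtain ⟨v, hv, hBcard⟩ := hcase1
    obtain ⟨P, hP, hPimg⟩ := subset_index (Finset.inter_subset_right : S ∩ T v ⊆ T v)
    obtain ⟨a, ha⟩ := hF3 v hv
    have hpart : insert v ((P.image (fun p => ((T v).sort (· ≤ ·)).getD p 0)) ∪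
        (S \ insert v (T v))) = S := by
      rw [hPimg]
      exact (hF2 v hv).symm
    obtain ⟨i, hi, hiv⟩ := index_of_mem hv
    obtain ⟨m, hm, hma⟩ := index_of_mem (Finset.mem_inter.1 ha).2
    refine ⟨v, S \ insert v (T v), P, i, m,
      ⟨Finset.mem_of_subset hSn hv, (Finset.sdiff_subset).trans hSn, hBcard,
        hP.trans (Finset.range_subset_range.2 (hT v).1), by omega, by
          have := (hT v).1; omega⟩, ?_⟩
    unfold decode
    simp only [hpart, hiv, hma]
    exact Finset.insert_eq_self.2 (Finset.mem_inter.1 ha).1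
  · -- all B's have size exactly r-2
    push_neg at hcase1
    have hBeq : ∀ v ∈ S, (S \ insert v (T v)).card = r - 2 := by
      intro v hv
      have := hF1 v hv
      have := hcase1 v hv
      omega
    by_cases hcase2 : ∃ v ∈ S, ∃ b ∈ S \ insert v (T v), ∃ u ∈ S, u ≠ b ∧ b ∈ T u
    · -- Case B1
      obtain ⟨v, hv, b, hb, u, hu, hub, hbTu⟩ := hcase2
      have hbS : b ∈ S := (Finset.mem_sdiff.1 hb).1
      have hbv : b ≠ v := fun hc =>
        (Finset.mem_sdiff.1 hb).2 (hc ▸ Finset.mem_insert_self _ _)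
      have hbT : b ∉ T v := fun hc =>
        (Finset.mem_sdiff.1 hb).2 (Finset.mem_insert_of_mem hc)
      obtain ⟨P, hP, hPimg⟩ := subset_index (Finset.inter_subset_right : S ∩ T v ⊆ T v)
      have hpart : insert v ((P.image (fun p => ((T v).sort (· ≤ ·)).getD p 0)) ∪
          ((S \ insert v (T v)).erase b)) = S.erase b := by
        rw [hPimg]
        apply Finset.Subset.antisymm
        · intro x hx
          rcases Finset.mem_insert.1 hx with rfl | hx
          · exact Finset.mem_erase.2 ⟨fun hc => hbv hc.symm, hv⟩
          · rcases Finset.mem_union.1 hx with hx | hx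
            · obtain ⟨hx1, hx2⟩ := Finset.mem_inter.1 hx
              exact Finset.mem_erase.2 ⟨fun hc => hbT (hc ▸ hx2), hx1⟩
            · obtain ⟨hx1, hx2⟩ := Finset.mem_erase.1 hx
              exact Finset.mem_erase.2 ⟨hx1, (Finset.mem_sdiff.1 hx2).1⟩
        · intro x hx
          obtain ⟨hx1, hx2⟩ := Finset.mem_erase.1 hx
          have := hF2 v hv
          rw [this] at hx2
          rcases Finset.mem_insert.1 hx2 with rfl | hx2
          · exact Finset.mem_insert_self _ _
          · rcases Finset.mem_union.1 hx2 with hx2 | hx2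
            · exact Finset.mem_insert_of_mem (Finset.mem_union_left _ hx2)
            · exact Finset.mem_insert_of_mem
                (Finset.mem_union_right _ (Finset.mem_erase.2 ⟨hx1, hx2⟩))
      have hupart : u ∈ S.erase b := Finset.mem_erase.2 ⟨hub, hu⟩
      obtain ⟨i, hi, hiu⟩ := index_of_mem hupart
      obtain ⟨m, hm, hmb⟩ := index_of_mem hbTu
      refine ⟨v, (S \ insert v (T v)).erase b, P, i, m,
        ⟨Finset.mem_of_subset hSn hv,
          ((Finset.erase_subset _ _).trans Finset.sdiff_subset).trans hSn, by
            rw [Finset.card_erase_of_mem hb, hBeq v hv]; omega, 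
          hP.trans (Finset.range_subset_range.2 (hT v).1), by
            have h5 : (S.erase b).card ≤ s := by
              rw [Finset.card_erase_of_mem hbS]; omega
            omega, by
            have := (hT u).1; omega⟩, ?_⟩
      unfold decode
      simp only [hpart, hiu, hmb]
      exact Finset.insert_erase hbS
    · -- Case B2 : contradiction
      exfalso
      push_neg at hcase2
      have hall : ∀ v ∈ S, ∀ u ∈ S, u ≠ v → v ∉ T u := by
        intro v hv
        -- find z in Bv
        have hzne : (S \ insert v (T v)).Nonempty := by
          rw [← Finset.card_pos, hBeq v hv]; omega
        obtain ⟨z, hz⟩ := hzne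
        have hzS : z ∈ S := (Finset.mem_sdiff.1 hz).1
        have hzv : z ≠ v := fun hc =>
          (Finset.mem_sdiff.1 hz).2 (hc ▸ Finset.mem_insert_self _ _)
        -- show v ∈ B z
        have hvBz : v ∈ S \ insert z (T z) := by
          by_contra hvBz
          have hsub : S \ insert z (T z) ⊆ (S \ insert v (T v)).erase z := by
            intro y hy
            have hyS : y ∈ S := (Finset.mem_sdiff.1 hy).1
            have hyz : y ≠ z := fun hc =>
              (Finset.mem_sdiff.1 hy).2 (hc ▸ Finset.mem_insert_self _ _)
            have hyv : y ≠ v := fun hc => hvBz (hc ▸ hy)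
            have hynT : y ∉ T v := hcase2 z hzS y hy v hv (fun hc => hyv hc.symm) -- check arg order
            refine Finset.mem_erase.2 ⟨hyz, Finset.mem_sdiff.2 ⟨hyS, ?_⟩⟩
            intro hc
            rcases Finset.mem_insert.1 hc with hc | hc
            · exact hyv hc
            · exact hynT hc
          have hc1 := Finset.card_le_card hsub
          rw [hBeq z hzS, Finset.card_erase_of_mem hz, hBeq v hv] at hc1
          omega
        intro u hu huv
        exact hcase2 z hzS v hvBz u hu huv
      obtain ⟨v0, hv0⟩ := hSne
      obtain ⟨a, ha⟩ := hF3 v0 hv0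
      obtain ⟨haS, haT⟩ := Finset.mem_inter.1 ha
      have hav0 : v0 ≠ a := fun hc => (hT v0).2.1 (hc ▸ haT)
      exact hall a haS v0 hv0 hav0 haT

lemma cliqF_card_le {G : HG} {r s l n : ℕ} {T : ℕ → Finset ℕ} (hr : 3 ≤ r) (hrs : r ≤ s)
    (hn : 1 ≤ n)
    (hT : ∀ v, (T v).card ≤ l*r ∧ v ∉ T v ∧ ∀ e ∈ G, v ∈ e → (e ∩ T v).Nonempty) :
    (cliqF r s n G).card ≤ ((r-2) * 2^(l*r) * (s + l*r + 1) * (l*r)) * n^(r-2) := by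
  classical
  set t := l * r with ht
  set Bset : Finset (Finset ℕ) :=
    (Finset.range n).powerset.filter (fun b => b.card ≤ r-3) with hBset
  set Cert := ((((Finset.range n) ×ˢ Bset) ×ˢ (Finset.range t).powerset) ×ˢ
    (Finset.range (s+t+1))) ×ˢ (Finset.range t) with hCert
  have hsub : cliqF r s n G ⊆ Cert.image
      (fun q => decode T q.1.1.1.1 q.1.1.1.2 q.1.1.2 q.1.2 q.2) := by
    intro S hS
    obtain ⟨v, B, P, i, m, ⟨h1, h2, h3, h4, h5, h6⟩, hdec⟩ := clique_cert hr hrs hT hS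
    refine Finset.mem_image.2 ⟨((((v, B), P), i), m), ?_, hdec⟩
    rw [hCert]
    refine Finset.mem_product.2 ⟨Finset.mem_product.2 ⟨Finset.mem_product.2
      ⟨Finset.mem_product.2 ⟨h1, ?_⟩, ?_⟩, ?_⟩, ?_⟩
    · rw [hBset, Finset.mem_filter, Finset.mem_powerset]
      exact ⟨h2, h3⟩
    · rw [Finset.mem_powerset]
      exact h4
    · exact Finset.mem_range.2 h5
    · exact Finset.mem_range.2 h6
  have hBcard : Bset.card ≤ (r-2) * n^(r-3) := by
    have hsub2 : Bset ⊆ (Finset.range (r-2)).biUnion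
        (fun j => Finset.powersetCard j (Finset.range n)) := by
      intro b hb
      rw [hBset, Finset.mem_filter, Finset.mem_powerset] at hb
      refine Finset.mem_biUnion.2 ⟨b.card, Finset.mem_range.2 (by omega), ?_⟩
      rw [Finset.mem_powersetCard]
      exact ⟨hb.1, rfl⟩
    calc Bset.card ≤ ((Finset.range (r-2)).biUnion
          (fun j => Finset.powersetCard j (Finset.range n))).card :=
          Finset.card_le_card hsub2
      _ ≤ ∑ j ∈ Finset.range (r-2), (Finset.powersetCard j (Finset.range n)).card :=
          Finset.card_biUnion_le
      _ ≤ ∑ j ∈ Finset.range (r-2), n^(r-3) := by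
          apply Finset.sum_le_sum
          intro j hj
          rw [Finset.card_powersetCard, Finset.card_range]
          calc n.choose j ≤ n^j := Nat.choose_le_pow n j
            _ ≤ n^(r-3) := Nat.pow_le_pow_right hn (by
                have := Finset.mem_range.1 hj; omega)
      _ = (r-2) * n^(r-3) := by rw [Finset.sum_const, Finset.card_range, smul_eq_mul]
  calc (cliqF r s n G).card
      ≤ (Cert.image (fun q => decode T q.1.1.1.1 q.1.1.1.2 q.1.1.2 q.1.2 q.2)).card :=
        Finset.card_le_card hsub
    _ ≤ Cert.card := Finset.card_image_le
    _ = n * Bset.card * 2^t * (s+t+1) * t := by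
        rw [hCert]
        simp [Finset.card_product, Finset.card_powerset]
    _ ≤ n * ((r-2) * n^(r-3)) * 2^t * (s+t+1) * t := by
        have h7 : n * Bset.card ≤ n * ((r-2) * n^(r-3)) := Nat.mul_le_mul_left n hBcard
        exact Nat.mul_le_mul_right t (Nat.mul_le_mul_right (s+t+1) (Nat.mul_le_mul_right (2^t) h7))
    _ = ((r-2) * 2^t * (s + t + 1) * t) * n^(r-2) := by
        have h8 : n * n^(r-3) = n^(r-2) := by
          rw [← pow_succ']
          congr 1
          omega
        calc n * ((r-2) * n^(r-3)) * 2^t * (s+t+1) * t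
            = ((r-2) * 2^t * (s+t+1) * t) * (n * n^(r-3)) := by ring
          _ = ((r-2) * 2^t * (s+t+1) * t) * n^(r-2) := by rw [h8]

/-- The main upper bound, natural number version. -/
lemma exCount_le {r s l n : ℕ} (hr : 3 ≤ r) (hrs : r ≤ s) (hl : 2 ≤ l) (hn : 1 ≤ n) :
    exCount r n (completeHG r s) (expansion r (starG l)) ≤
      ((r-2) * 2^(l*r) * (s + l*r + 1) * (l*r)) * n^(r-2) := by
  classical
  unfold exCount
  apply csSup_le
  · refine ⟨copyCount (completeHG r s) ∅, ∅, ?_, ?_, ?_, rfl⟩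
    · intro e he; exact absurd he (Finset.notMem_empty e)
    · intro x hx
      rw [mem_hsupp] at hx  -- hsupp ∅: x ∈ hsupp ∅ → ∃ e ∈ ∅
      obtain ⟨e, he, _⟩ := hx
      exact absurd he (Finset.notMem_empty e)
    · intro hcon
      obtain ⟨v, F, hFsub, hFcard, _, _⟩ := sunflower_of_contains (by omega) hcon
      have : F = ∅ := Finset.subset_empty.1 hFsub
      rw [this, Finset.card_empty] at hFcard
      omega
  · rintro m ⟨G, hG, hGn, hfree, rfl⟩
    have hfree' : ¬ Sunflower G l := fun hs => hfree (contains_of_sunflower hr hG hs)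
    have hTex : ∀ v, ∃ Tv : Finset ℕ, Tv.card ≤ l * r ∧ v ∉ Tv ∧
        ∀ e ∈ G, v ∈ e → (e ∩ Tv).Nonempty := fun v => cover_exists (by omega) hG hfree' v
    choose T hT1 hT2 hT3 using hTex
    have hT : ∀ v, (T v).card ≤ l*r ∧ v ∉ T v ∧ ∀ e ∈ G, v ∈ e → (e ∩ T v).Nonempty :=
      fun v => ⟨hT1 v, hT2 v, hT3 v⟩
    calc copyCount (completeHG r s) G ≤ (cliqF r s n G).card :=
          copyCount_le_cliqF (by omega) hrs hGn
      _ ≤ ((r-2) * 2^(l*r) * (s + l*r + 1) * (l*r)) * n^(r-2) :=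
          cliqF_card_le hr hrs hn hT

/-- The lower-bound construction: all `r`-sets meeting `range l` in at least two vertices. -/
def GW (r l n : ℕ) : HG :=
  (Finset.powersetCard r (Finset.range n)).filter (fun e => 2 ≤ (e ∩ Finset.range l).card)

lemma GW_uniform (r l n : ℕ) : Uniform r (GW r l n) :=
  fun e he => (Finset.mem_powersetCard.1 (Finset.mem_filter.1 he).1).2

lemma GW_supp (r l n : ℕ) : hsupp (GW r l n) ⊆ Finset.range n := by
  intro x hx
  obtain ⟨e, he, hxe⟩ := mem_hsupp.1 hx
  exact (Finset.mem_powersetCard.1 (Finset.mem_filter.1 he).1).1 hxe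

lemma GW_free {r l n : ℕ} (hl : 1 ≤ l) : ¬ Sunflower (GW r l n) l := by
  classical
  rintro ⟨v, F, hFG, hFcard, hFv, hFint⟩
  have hdisj : ∀ e ∈ F, ∀ e' ∈ F, e ≠ e' →
      Disjoint ((e ∩ Finset.range l).erase v) ((e' ∩ Finset.range l).erase v) := by
    intro e he e' he' hne
    rw [Finset.disjoint_left]
    intro x hx hx'
    have h1 : x ∈ e ∩ e' := Finset.mem_inter.2
      ⟨(Finset.mem_inter.1 (Finset.mem_erase.1 hx).2).1,
       (Finset.mem_inter.1 (Finset.mem_erase.1 hx').2).1⟩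
    rw [hFint e he e' he' hne] at h1
    exact (Finset.mem_erase.1 hx).1 (Finset.mem_singleton.1 h1)
  have hsub3 : F.biUnion (fun e => (e ∩ Finset.range l).erase v) ⊆
      (Finset.range l).erase v := by
    intro x hx
    obtain ⟨e, he, hxe⟩ := Finset.mem_biUnion.1 hx
    exact Finset.mem_erase.2 ⟨(Finset.mem_erase.1 hxe).1,
      (Finset.mem_inter.1 (Finset.mem_erase.1 hxe).2).2⟩
  have hbig : ∀ e ∈ F, 2 ≤ (e ∩ Finset.range l).card :=
    fun e he => (Finset.mem_filter.1 (hFG he)).2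
  by_cases hvl : v ∈ Finset.range l
  · -- erase has card l - 1, but the union needs l elements
    have hone : ∀ e ∈ F, 1 ≤ ((e ∩ Finset.range l).erase v).card := by
      intro e he
      have h2 := hbig e he
      have h3 := Finset.pred_card_le_card_erase (s := e ∩ Finset.range l) (a := v)
      omega
    have hchain : l ≤ l - 1 := by
      calc l = F.card := hFcard.symm
        _ = ∑ _e ∈ F, 1 := by simp
        _ ≤ ∑ e ∈ F, ((e ∩ Finset.range l).erase v).card := Finset.sum_le_sum hone
        _ = (F.biUnion (fun e => (e ∩ Finset.range l).erase v)).card :=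
            (Finset.card_biUnion hdisj).symm
        _ ≤ ((Finset.range l).erase v).card := Finset.card_le_card hsub3
        _ = l - 1 := by rw [Finset.card_erase_of_mem hvl, Finset.card_range]
    omega
  · -- each petal uses two elements of range l
    have htwo : ∀ e ∈ F, 2 ≤ ((e ∩ Finset.range l).erase v).card := by
      intro e he
      have h2 := hbig e he
      have hveq : (e ∩ Finset.range l).erase v = e ∩ Finset.range l :=
        Finset.erase_eq_of_notMem (fun hc => hvl (Finset.mem_inter.1 hc).2)
      rw [hveq]
      exact h2
    have hchain : 2 * l ≤ l := by
      calc 2 * l = ∑ _e ∈ F, 2 := by rw [Finset.sum_const, hFcard, smul_eq_mul, mul_comm]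
        _ ≤ ∑ e ∈ F, ((e ∩ Finset.range l).erase v).card := Finset.sum_le_sum htwo
        _ = (F.biUnion (fun e => (e ∩ Finset.range l).erase v)).card :=
            (Finset.card_biUnion hdisj).symm
        _ ≤ ((Finset.range l).erase v).card := Finset.card_le_card hsub3
        _ ≤ l := by
            rw [Finset.erase_eq_of_notMem hvl, Finset.card_range]
    omega

lemma GW_cliques {r s l n : ℕ} (hr : 3 ≤ r) (hrs : r ≤ s) (hsl : s ≤ l + r - 2)
    (hln : l ≤ n) :
    (n - l).choose (r - 2) ≤ (cliqF r s n (GW r l n)).card := by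
  classical
  set k := s - (r-2) with hk
  have hkl : k ≤ l := by omega
  set D0 := Finset.range n \ Finset.range l with hD0
  have hD0card : D0.card = n - l := by
    rw [hD0, Finset.card_sdiff_of_subset (Finset.range_subset_range.2 hln), Finset.card_range,
      Finset.card_range]
  have hmap : ∀ D ∈ Finset.powersetCard (r-2) D0,
      (Finset.range k ∪ D) ∈ cliqF r s n (GW r l n) := by
    intro D hD
    rw [Finset.mem_powersetCard] at hD
    obtain ⟨hDsub, hDcard⟩ := hD
    have hDl : ∀ x ∈ D, x ∉ Finset.range l := by
      intro x hx
      exact (Finset.mem_sdiff.1 (hDsub hx)).2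
    have hDn : D ⊆ Finset.range n := fun x hx => (Finset.mem_sdiff.1 (hDsub hx)).1
    have hkn : Finset.range k ⊆ Finset.range n :=
      Finset.range_subset_range.2 (le_trans hkl hln)
    have hkl2 : Finset.range k ⊆ Finset.range l := Finset.range_subset_range.2 hkl
    have hdisj2 : Disjoint (Finset.range k) D := by
      rw [Finset.disjoint_left]
      intro x hx hxD
      exact hDl x hxD (hkl2 hx)
    apply mem_cliqF_iff.2
    refine ⟨Finset.union_subset hkn hDn, ?_, ?_⟩
    · rw [Finset.card_union_of_disjoint hdisj2, Finset.card_range, hDcard]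
      omega
    · intro e he
      rw [Finset.mem_powersetCard] at he
      obtain ⟨hesub, hecard⟩ := he
      unfold GW
      rw [Finset.mem_filter, Finset.mem_powersetCard]
      refine ⟨⟨hesub.trans (Finset.union_subset hkn hDn), hecard⟩, ?_⟩
      have hsub4 : e \ D ⊆ e ∩ Finset.range l := by
        intro x hx
        obtain ⟨hx1, hx2⟩ := Finset.mem_sdiff.1 hx
        refine Finset.mem_inter.2 ⟨hx1, ?_⟩
        rcases Finset.mem_union.1 (hesub hx1) with h | h
        · exact hkl2 h
        · exact absurd h hx2
      calc 2 = r - (r-2) := by omega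
        _ ≤ e.card - D.card := by rw [hecard, hDcard]
        _ ≤ (e \ D).card := Finset.le_card_sdiff D e
        _ ≤ (e ∩ Finset.range l).card := Finset.card_le_card hsub4
  have hinj : Set.InjOn (fun D => Finset.range k ∪ D)
      (↑(Finset.powersetCard (r-2) D0) : Set (Finset ℕ)) := by
    intro D hD D' hD' hDD
    rw [Finset.mem_coe, Finset.mem_powersetCard] at hD hD'
    have key : ∀ E : Finset ℕ, E ⊆ D0 → (Finset.range k ∪ E) \ Finset.range l = E := by
      intro E hE
      apply Finset.Subset.antisymm
      · intro x hx
        obtain ⟨hx1, hx2⟩ := Finset.mem_sdiff.1 hx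
        rcases Finset.mem_union.1 hx1 with h | h
        · exact absurd (Finset.range_subset_range.2 hkl h) hx2
        · exact h
      · intro x hx
        exact Finset.mem_sdiff.2 ⟨Finset.mem_union_right _ hx,
          (Finset.mem_sdiff.1 (hE hx)).2⟩
    have h1 := key D hD.1
    have h2 := key D' hD'.1
    have hDD' : Finset.range k ∪ D = Finset.range k ∪ D' := hDD
    rw [← h1, ← h2, hDD']
  calc (n - l).choose (r-2) = (Finset.powersetCard (r-2) D0).card := by
        rw [Finset.card_powersetCard, hD0card]
    _ = ((fun D => Finset.range k ∪ D) '' ↑(Finset.powersetCard (r-2) D0)).ncard := by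
        rw [Set.ncard_image_of_injOn hinj, Set.ncard_coe_finset]
    _ ≤ ((cliqF r s n (GW r l n) : Finset (Finset ℕ)) : Set (Finset ℕ)).ncard := by
        apply Set.ncard_le_ncard
        · rintro S ⟨D, hD, rfl⟩
          exact Finset.mem_coe.2 (hmap D (Finset.mem_coe.1 hD))
        · exact Finset.finite_toSet _
    _ = (cliqF r s n (GW r l n)).card := Set.ncard_coe_finset _

lemma exCount_ge {r s l n : ℕ} (hr : 3 ≤ r) (hrs : r ≤ s) (hl : 2 ≤ l)
    (hsl : s ≤ l + r - 2) (hln : l ≤ n) :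
    (n - l).choose (r-2) ≤ exCount r n (completeHG r s) (expansion r (starG l)) := by
  classical
  unfold exCount
  have hmem : copyCount (completeHG r s) (GW r l n) ∈
      { m | ∃ G : HG, Uniform r G ∧ hsupp G ⊆ Finset.range n ∧
        ¬ Contains G (expansion r (starG l)) ∧ m = copyCount (completeHG r s) G } :=
    ⟨GW r l n, GW_uniform r l n, GW_supp r l n,
      fun hcon => GW_free (by omega) (sunflower_of_contains (by omega) hcon), rfl⟩
  have hbdd : BddAbove { m | ∃ G : HG, Uniform r G ∧ hsupp G ⊆ Finset.range n ∧
      ¬ Contains G (expansion r (starG l)) ∧ m = copyCount (completeHG r s) G } := by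
    refine ⟨2 ^ (Finset.powersetCard r (Finset.range n)).card, ?_⟩
    rintro m ⟨G, hG, hGn, _, rfl⟩
    have hGsub : G ⊆ Finset.powersetCard r (Finset.range n) := by
      intro e he
      rw [Finset.mem_powersetCard]
      exact ⟨(edge_subset_hsupp he).trans hGn, hG e he⟩
    calc copyCount (completeHG r s) G
        ≤ ((↑G.powerset : Set (Finset (Finset ℕ)))).ncard := by
          unfold copyCount
          apply Set.ncard_le_ncard
          · intro K hK
            exact Finset.mem_coe.2 (Finset.mem_powerset.2 hK.1)
          · exact Finset.finite_toSet _
      _ = G.powerset.card := Set.ncard_coe_finset _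
      _ = 2 ^ G.card := Finset.card_powerset G
      _ ≤ 2 ^ (Finset.powersetCard r (Finset.range n)).card :=
          Nat.pow_le_pow_right (by norm_num) (Finset.card_le_card hGsub)
  calc (n - l).choose (r-2) ≤ (cliqF r s n (GW r l n)).card :=
        GW_cliques hr hrs hsl hln
    _ ≤ copyCount (completeHG r s) (GW r l n) := cliqF_le_copyCount (by omega) hrs
    _ ≤ _ := le_csSup hbdd hmem

end Stmt5Aux

/-- For `s ≥ r ≥ 3` and `l ≥ 2` there is a constant `c = c(s,r,l)` with
`ex_r(n, K_s^{(r)}, S_l^r) ≤ c·n^{r-2}` for all large `n`; moreover if `s ≤ l + r - 2`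
there is also a constant `c' > 0` with `ex_r(n, K_s^{(r)}, S_l^r) ≥ c'·n^{r-2}`
for all large `n`. -/
theorem stmt5 (r s l : ℕ) (hr : 3 ≤ r) (hrs : r ≤ s) (hl : 2 ≤ l) :
    (∃ c : ℝ, ∃ N : ℕ, ∀ n : ℕ, N ≤ n →
      (exCount r n (completeHG r s) (expansion r (starG l)) : ℝ) ≤ c * (n : ℝ) ^ (r - 2)) ∧
    (s ≤ l + r - 2 → ∃ c' : ℝ, 0 < c' ∧ ∃ N : ℕ, ∀ n : ℕ, N ≤ n →
      c' * (n : ℝ) ^ (r - 2) ≤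
        (exCount r n (completeHG r s) (expansion r (starG l)) : ℝ)) := by
  constructor
  · refine ⟨(((r-2) * 2^(l*r) * (s + l*r + 1) * (l*r) : ℕ) : ℝ), 1, ?_⟩
    intro n hn
    have h := Stmt5Aux.exCount_le (r := r) (s := s) (l := l) (n := n) hr hrs hl hn
    calc (exCount r n (completeHG r s) (expansion r (starG l)) : ℝ)
        ≤ ((((r-2) * 2^(l*r) * (s + l*r + 1) * (l*r)) * n^(r-2) : ℕ) : ℝ) := Nat.cast_le.2 h
      _ = (((r-2) * 2^(l*r) * (s + l*r + 1) * (l*r) : ℕ) : ℝ) * (n : ℝ) ^ (r-2) := by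
          push_cast
          ring
  · intro hsl
    have hCpos : 0 < (r-2).factorial * 2^(r-2) :=
      Nat.mul_pos (Nat.factorial_pos _) (pow_pos (by norm_num) _)
    refine ⟨1 / (((r-2).factorial * 2^(r-2) : ℕ) : ℝ), ?_, 2*(l+r), ?_⟩
    · apply one_div_pos.2
      exact_mod_cast hCpos
    · intro n hn
      have hnat : n^(r-2) ≤ ((r-2).factorial * 2^(r-2)) * ((n-l).choose (r-2)) := by
        have h1 : (n - l + 1 - (r-2))^(r-2) ≤ (n-l).descFactorial (r-2) :=
          Nat.pow_sub_le_descFactorial _ _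
        rw [Nat.descFactorial_eq_factorial_mul_choose] at h1
        have h2 : n ≤ 2 * (n - l + 1 - (r-2)) := by omega
        calc n^(r-2) ≤ (2 * (n - l + 1 - (r-2)))^(r-2) := Nat.pow_le_pow_left h2 _
          _ = 2^(r-2) * (n - l + 1 - (r-2))^(r-2) := by rw [mul_pow]
          _ ≤ 2^(r-2) * ((r-2).factorial * (n-l).choose (r-2)) :=
              Nat.mul_le_mul_left _ h1
          _ = ((r-2).factorial * 2^(r-2)) * ((n-l).choose (r-2)) := by ring
      have hge := Stmt5Aux.exCount_ge (r := r) (s := s) (l := l) (n := n)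
        hr hrs hl hsl (by omega)
      have hnat2 : n^(r-2) ≤ ((r-2).factorial * 2^(r-2)) *
          exCount r n (completeHG r s) (expansion r (starG l)) :=
        le_trans hnat (Nat.mul_le_mul_left _ hge)
      have hreal : ((n : ℝ)) ^ (r-2) ≤ (((r-2).factorial * 2^(r-2) : ℕ) : ℝ) *
          (exCount r n (completeHG r s) (expansion r (starG l)) : ℝ) := by
        have := (Nat.cast_le (α := ℝ)).2 hnat2
        push_cast at this ⊢
        convert this using 2 <;> push_cast <;> ring
      have hCpos' : (0:ℝ) < (((r-2).factorial * 2^(r-2) : ℕ) : ℝ) := by exact_mod_cast hCpos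
      rw [div_mul_eq_mul_div, one_mul, div_le_iff₀ hCpos']
      calc (n:ℝ)^(r-2) ≤ _ := hreal
        _ = (exCount r n (completeHG r s) (expansion r (starG l)) : ℝ) *
            (((r-2).factorial * 2^(r-2) : ℕ) : ℝ) := by ring
end
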